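/- arXiv:1604.04766 — 8 statements merged into one kernel-verified Lean document; each statement's English description precedes it below -/
import Mathlib

section
/- For every permutation π of {1,…,n}, the minimum number of prefix exchanges (transpositions of the form (1,i) with 2 ≤ i ≤ n) needed to transform π into the identity equals n + c₂(π) − c₁(π) − d, where c₁(π) is the number of fixed points of π, c₂(π) is the number of cycles of π of length at least 2, and d = 0 if π(1) = 1 and d = 2 otherwise. -/
open Equiv Finset
open scoped Classical

noncomputable section

/-- Number of fixed points of a permutation. -/
def c1 {n : ℕ} (π : Equiv.Perm (Fin n)) : ℕ :=
  (Finset.univ.filter fun i => π i = i).card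

/-- Number of cycles of length at least 2 of a permutation. -/
def c2 {n : ℕ} (π : Equiv.Perm (Fin n)) : ℕ := π.cycleType.card

/-- The prefix exchange distance: the minimum number of prefix exchanges
(right-composition with a transposition `(1, i)`, `i ≠ 1`) sorting `π`. -/
def pexcDist {n : ℕ} (π : Equiv.Perm (Fin (n + 1))) : ℕ :=
  sInf {m : ℕ | ∃ l : List (Equiv.Perm (Fin (n + 1))), l.length = m ∧
    (∀ g ∈ l, ∃ i : Fin (n + 1), i ≠ 0 ∧ g = Equiv.swap 0 i) ∧ π * l.prod = 1}

/-!
Let `Φ π = n + 1 + c₂ π - c₁ π - d` be the right-hand side. Right-multiplying by `swap 0 i`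
changes `π` only at `0` and `i`, so the fixed points and the cycles of `π` avoiding `{0, i}`
are the same before and after. Hence the change of `Φ` equals the change of a local weight: the
number of nontrivial cycles through `0` or `i`, plus one if `π 0 ∈ {0, i}`. This weight always
lies in `{1, 2}`, so a prefix exchange lowers `Φ` by at most one, and `Φ` is a lower bound.
Conversely, exchanging with `i = π 0` (or, when `0` is fixed, with any moved `i`) lowers `Φ` by
exactly one.
-/

theorem Finset.card_filter_pair {α : Type*} [DecidableEq α] {x y : α} (hxy : x ≠ y)
    (p : α → Prop) [DecidablePred p] :
    #{a ∈ {x, y} | p a} = (if p x then 1 else 0) + (if p y then 1 else 0) := by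
  rw [card_filter, sum_pair hxy]

namespace Equiv.Perm

variable {α : Type*} [Fintype α] [DecidableEq α]

def cyclesThrough (f : Perm α) (s : Finset α) : Finset (Perm α) :=
  {a ∈ s | f a ≠ a}.image f.cycleOf

theorem card_cyclesThrough_le (f : Perm α) (s : Finset α) :
    #(f.cyclesThrough s) ≤ #{a ∈ s | f a ≠ a} :=
  card_image_le

theorem cyclesThrough_nonempty {f : Perm α} {s : Finset α} {a : α} (ha : a ∈ s)
    (hfa : f a ≠ a) :
    (f.cyclesThrough s).Nonempty :=
  ⟨f.cycleOf a, mem_image_of_mem _ (mem_filter.mpr ⟨ha, hfa⟩)⟩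

theorem cyclesThrough_eq_empty {f : Perm α} {s : Finset α} (h : ∀ a ∈ s, f a = a) :
    f.cyclesThrough s = ∅ := by
  simpa [cyclesThrough, filter_eq_empty_iff] using h

theorem card_cyclesThrough_pair_le_one_of_sameCycle {f : Perm α} {x y : α} (h : f.SameCycle x y) :
    #(f.cyclesThrough {x, y}) ≤ 1 := by
  refine card_le_one.mpr fun c hc d hd => ?_
  simp only [cyclesThrough, mem_image, mem_filter, mem_insert, mem_singleton] at hc hd
  obtain ⟨a, ⟨rfl | rfl, -⟩, rfl⟩ := hc <;>
    obtain ⟨b, ⟨rfl | rfl, -⟩, rfl⟩ := hd <;> simp [h.cycleOf_eq]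

theorem card_cyclesThrough_pair_le_one_of_apply_eq {f : Perm α} {x y : α} (hy : f y = y) :
    #(f.cyclesThrough {x, y}) ≤ 1 := by
  refine (card_cyclesThrough_le f _).trans (card_le_one.mpr fun a ha b hb => ?_)
  simp only [mem_filter, mem_insert, mem_singleton] at ha hb
  obtain ⟨rfl | rfl, ha⟩ := ha <;> obtain ⟨rfl | rfl, hb⟩ := hb <;> simp_all

theorem mem_cycleFactorsFinset_of_eqOn_compl {f g c : Perm α} {s : Finset α}
    (h : ∀ a ∉ s, f a = g a) (hc : c ∈ f.cycleFactorsFinset) (hcs : ∀ a ∈ s, c a = a) :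
    c ∈ g.cycleFactorsFinset := by
  rw [mem_cycleFactorsFinset_iff] at hc ⊢
  refine ⟨hc.1, fun a ha => ?_⟩
  rw [hc.2 a ha, h a fun has => mem_support.mp ha (hcs a has)]

theorem filter_cycleFactorsFinset_not_fixing (f : Perm α) (s : Finset α) :
    {c ∈ f.cycleFactorsFinset | ¬ ∀ a ∈ s, c a = a} = f.cyclesThrough s := by
  ext c
  simp only [cyclesThrough, mem_filter, mem_image, not_forall]
  constructor
  · rintro ⟨hc, a, ha, hca⟩
    refine ⟨a, ⟨ha, ?_⟩, (cycle_is_cycleOf (mem_support.mpr hca) hc).symm⟩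
    rwa [← (mem_cycleFactorsFinset_iff.mp hc).2 a (mem_support.mpr hca)]
  · rintro ⟨a, ⟨ha, hfa⟩, rfl⟩
    exact ⟨cycleOf_mem_cycleFactorsFinset_iff.mpr (mem_support.mpr hfa), a, ha,
      by rwa [cycleOf_apply_self]⟩

theorem card_cycleFactorsFinset_sub_card_cyclesThrough_eq {f g : Perm α} {s : Finset α}
    (h : ∀ a ∉ s, f a = g a) :
    (#f.cycleFactorsFinset : ℤ) - #(f.cyclesThrough s) =
      #g.cycleFactorsFinset - #(g.cyclesThrough s) := by
  have hfix : {c ∈ f.cycleFactorsFinset | ∀ a ∈ s, c a = a} =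
      {c ∈ g.cycleFactorsFinset | ∀ a ∈ s, c a = a} := by
    ext c
    simp only [mem_filter]
    exact ⟨fun ⟨hc, hcs⟩ => ⟨mem_cycleFactorsFinset_of_eqOn_compl h hc hcs, hcs⟩,
      fun ⟨hc, hcs⟩ =>
        ⟨mem_cycleFactorsFinset_of_eqOn_compl (fun a ha => (h a ha).symm) hc hcs, hcs⟩⟩
  rw [← filter_cycleFactorsFinset_not_fixing, ← filter_cycleFactorsFinset_not_fixing,
    ← card_filter_add_card_filter_not (s := f.cycleFactorsFinset) (fun c => ∀ a ∈ s, c a = a),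
    ← card_filter_add_card_filter_not (s := g.cycleFactorsFinset) (fun c => ∀ a ∈ s, c a = a),
    hfix]
  push_cast
  ring

theorem card_fixed_sub_card_fixed_mem_eq {f g : Perm α} {s : Finset α}
    (h : ∀ a ∉ s, f a = g a) :
    (#{a | f a = a} : ℤ) - #{a ∈ s | f a = a} = #{a | g a = a} - #{a ∈ s | g a = a} := by
  have hcompl : #{a ∈ sᶜ | f a = a} = #{a ∈ sᶜ | g a = a} := by
    congr 1
    ext a
    simp +contextual [h a]
  have hsplit (φ : Perm α) :
      #{a | φ a = a} = #{a ∈ s | φ a = a} + #{a ∈ sᶜ | φ a = a} := by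
    rw [← card_union_of_disjoint (disjoint_filter_filter disjoint_compl_right), ← filter_union,
      union_compl]
  rw [hsplit f, hsplit g, hcompl]
  push_cast
  ring

end Equiv.Perm

section PrefixExchange

variable {n : ℕ}

def IsPrefixExchange (g : Perm (Fin (n + 1))) : Prop :=
  ∃ i, i ≠ 0 ∧ g = swap 0 i

def pexcPotential (π : Perm (Fin (n + 1))) : ℤ :=
  (n + 1 : ℤ) + c2 π - c1 π - (if π 0 = 0 then 0 else 2)

def exchangeWeight (π : Perm (Fin (n + 1))) (i : Fin (n + 1)) : ℕ :=
  #(π.cyclesThrough {0, i}) + if π 0 = 0 ∨ π 0 = i then 1 else 0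

theorem c2_eq_card_cycleFactorsFinset {m : ℕ} (π : Perm (Fin m)) :
    c2 π = #π.cycleFactorsFinset := by
  rw [c2, Perm.cycleType_def, Multiset.card_map]
  rfl

theorem pexcPotential_mul_swap_sub (π : Perm (Fin (n + 1))) {i : Fin (n + 1)} (hi : i ≠ 0) :
    pexcPotential (π * swap 0 i) - pexcPotential π =
      exchangeWeight (π * swap 0 i) i - exchangeWeight π i := by
  have hout : ∀ a ∉ ({0, i} : Finset (Fin (n + 1))), π a = (π * swap 0 i) a := by
    intro a ha
    simp only [mem_insert, mem_singleton, not_or] at ha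
    rw [Perm.mul_apply, swap_apply_of_ne_of_ne ha.1 ha.2]
  have hcycles := Perm.card_cycleFactorsFinset_sub_card_cyclesThrough_eq hout
  have hfixed := Perm.card_fixed_sub_card_fixed_mem_eq hout
  rw [Finset.card_filter_pair hi.symm, Finset.card_filter_pair hi.symm] at hfixed
  simp only [pexcPotential, exchangeWeight, c2_eq_card_cycleFactorsFinset, c1, Perm.mul_apply,
    swap_apply_left, swap_apply_right] at hcycles hfixed ⊢
  split_ifs at hfixed ⊢ <;> grind

theorem one_le_exchangeWeight (π : Perm (Fin (n + 1))) (i : Fin (n + 1)) :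
    1 ≤ exchangeWeight π i := by
  rw [exchangeWeight]
  split_ifs with h
  · omega
  · push Not at h
    have := (Perm.cyclesThrough_nonempty (mem_insert_self 0 {i}) h.1).card_pos
    omega

theorem exchangeWeight_le_two (π : Perm (Fin (n + 1))) (i : Fin (n + 1)) :
    exchangeWeight π i ≤ 2 := by
  rw [exchangeWeight]
  split_ifs with h
  · suffices #(π.cyclesThrough {0, i}) ≤ 1 by omega
    rcases h with h | h
    · rw [pair_comm]
      exact Perm.card_cyclesThrough_pair_le_one_of_apply_eq h
    · exact Perm.card_cyclesThrough_pair_le_one_of_sameCycle ⟨1, by simpa using h⟩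
  · have := (Perm.card_cyclesThrough_le π {0, i}).trans ((card_filter_le _ _).trans card_le_two)
    omega

theorem pexcPotential_le_mul_swap_add_one (π : Perm (Fin (n + 1))) {i : Fin (n + 1)}
    (hi : i ≠ 0) : pexcPotential π ≤ pexcPotential (π * swap 0 i) + 1 := by
  have := pexcPotential_mul_swap_sub π hi
  have := one_le_exchangeWeight (π * swap 0 i) i
  have := exchangeWeight_le_two π i
  omega

theorem pexcPotential_mul_swap_add_one_eq {π : Perm (Fin (n + 1))} {i : Fin (n + 1)}
    (hi : i ≠ 0) (hπ : 2 ≤ exchangeWeight π i)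
    (hσ : exchangeWeight (π * swap 0 i) i ≤ 1) :
    pexcPotential (π * swap 0 i) + 1 = pexcPotential π := by
  have := pexcPotential_mul_swap_sub π hi
  have := exchangeWeight_le_two π i
  have := one_le_exchangeWeight (π * swap 0 i) i
  omega

theorem pexcPotential_mul_swap_add_one_of_apply_zero_eq_zero {π : Perm (Fin (n + 1))}
    {i : Fin (n + 1)} (h0 : π 0 = 0) (hi : π i ≠ i) :
    pexcPotential (π * swap 0 i) + 1 = pexcPotential π := by
  have hi0 : i ≠ 0 := by rintro rfl; exact hi h0
  have hπi0 : π i ≠ 0 := fun h => hi0 (π.injective (h.trans h0.symm))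
  have hπ : 2 ≤ exchangeWeight π i := by
    have := (Perm.cyclesThrough_nonempty (s := {0, i}) (mem_insert_of_mem (mem_singleton_self i))
      hi).card_pos
    simp only [exchangeWeight, h0, true_or, if_true]
    omega
  have hσ : exchangeWeight (π * swap 0 i) i ≤ 1 := by
    have hsame : (π * swap 0 i).SameCycle i 0 := ⟨1, by simp [h0]⟩
    have := Perm.card_cyclesThrough_pair_le_one_of_sameCycle hsame.symm
    simp only [exchangeWeight, Perm.mul_apply, swap_apply_left, hπi0, hi, or_self, if_false]
    omega
  exact pexcPotential_mul_swap_add_one_eq hi0 hπ hσ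

theorem pexcPotential_mul_swap_apply_zero_add_one {π : Perm (Fin (n + 1))} (h0 : π 0 ≠ 0) :
    pexcPotential (π * swap 0 (π 0)) + 1 = pexcPotential π := by
  have hπ : 2 ≤ exchangeWeight π (π 0) := by
    have := (Perm.cyclesThrough_nonempty (mem_insert_self 0 {π 0}) h0).card_pos
    simp only [exchangeWeight, or_true, if_true]
    omega
  have hσ : exchangeWeight (π * swap 0 (π 0)) (π 0) ≤ 1 := by
    have hfix : (π * swap 0 (π 0)) (π 0) = π 0 := by simp
    by_cases h : π (π 0) = 0
    · have hσ0 : (π * swap 0 (π 0)) 0 = 0 := by simpa using h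
      have hempty := Perm.cyclesThrough_eq_empty (f := π * swap 0 (π 0)) (s := {0, π 0})
        (by simp [h])
      simp [exchangeWeight, hempty, hσ0]
    · have := Perm.card_cyclesThrough_pair_le_one_of_apply_eq (x := 0) hfix
      have hne : π (π 0) ≠ π 0 := fun h' => h0 (π.injective h')
      simp only [exchangeWeight, Perm.mul_apply, swap_apply_left, h, hne, or_self, if_false]
      omega
  exact pexcPotential_mul_swap_add_one_eq h0 hπ hσ

theorem exists_pexcPotential_mul_swap_add_one_eq {π : Perm (Fin (n + 1))} (h : π ≠ 1) :
    ∃ i, i ≠ 0 ∧ pexcPotential (π * swap 0 i) + 1 = pexcPotential π := by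
  by_cases h0 : π 0 = 0
  · obtain ⟨i, hi⟩ : ∃ i, π i ≠ i := by
      by_contra! hfix
      exact h (Equiv.ext hfix)
    exact ⟨i, by rintro rfl; exact hi h0,
      pexcPotential_mul_swap_add_one_of_apply_zero_eq_zero h0 hi⟩
  · exact ⟨π 0, h0, pexcPotential_mul_swap_apply_zero_add_one h0⟩

theorem pexcPotential_one : pexcPotential (1 : Perm (Fin (n + 1))) = 0 := by
  simp [pexcPotential, c1, c2]

theorem pexcPotential_nonneg (π : Perm (Fin (n + 1))) : 0 ≤ pexcPotential π := by
  have hsupp : c1 π + #π.support = n + 1 := by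
    rw [c1, Perm.support, card_filter_add_card_filter_not, card_univ, Fintype.card_fin]
  rw [pexcPotential]
  split_ifs with h0
  · omega
  · have := Perm.two_le_card_support_of_ne_one (f := π) fun h => h0 (by simp [h])
    omega

theorem pexcPotential_le_length {l : List (Perm (Fin (n + 1)))}
    (hl : ∀ g ∈ l, IsPrefixExchange g) {π : Perm (Fin (n + 1))} (h : π * l.prod = 1) :
    pexcPotential π ≤ l.length := by
  induction l generalizing π with
  | nil =>
    rw [List.prod_nil, mul_one] at h
    simp [h, pexcPotential_one]
  | cons g l ih =>
    obtain ⟨i, hi, rfl⟩ := hl g List.mem_cons_self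
    rw [List.prod_cons, ← mul_assoc] at h
    have := ih (fun g hg => hl g (List.mem_cons_of_mem _ hg)) h
    have := pexcPotential_le_mul_swap_add_one π hi
    rw [List.length_cons]
    push_cast
    linarith

theorem exists_prefixExchanges_of_pexcPotential_eq (k : ℕ) :
    ∀ π : Perm (Fin (n + 1)), pexcPotential π = k →
      ∃ l : List (Perm (Fin (n + 1))), l.length = k ∧ (∀ g ∈ l, IsPrefixExchange g) ∧
        π * l.prod = 1 := by
  induction k with
  | zero =>
    intro π hπ
    refine ⟨[], rfl, by simp, ?_⟩
    by_contra h
    obtain ⟨i, -, hi⟩ := exists_pexcPotential_mul_swap_add_one_eq (by simpa using h)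
    have := pexcPotential_nonneg (π * swap 0 i)
    push_cast at hπ
    omega
  | succ k ih =>
    intro π hπ
    have h1 : π ≠ 1 := by
      rintro rfl
      rw [pexcPotential_one] at hπ
      omega
    obtain ⟨i, hi, hσ⟩ := exists_pexcPotential_mul_swap_add_one_eq h1
    obtain ⟨l, hlen, hl, hprod⟩ := ih (π * swap 0 i) (by push_cast at hπ; linarith)
    refine ⟨swap 0 i :: l, by simp [hlen], ?_, by rw [List.prod_cons, ← mul_assoc, hprod]⟩
    intro g hg
    rcases List.mem_cons.mp hg with rfl | hg
    · exact ⟨i, hi, rfl⟩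
    · exact hl g hg

theorem pexcDist_eq_pexcPotential (π : Perm (Fin (n + 1))) :
    (pexcDist π : ℤ) = pexcPotential π := by
  lift pexcPotential π to ℕ using pexcPotential_nonneg π with k hk
  obtain ⟨l, hlen, hl, hprod⟩ := exists_prefixExchanges_of_pexcPotential_eq k π hk.symm
  have : pexcDist π = k := by
    refine le_antisymm (Nat.sInf_le ⟨l, hlen, hl, hprod⟩)
      (le_csInf ⟨k, l, hlen, hl, hprod⟩ ?_)
    rintro m ⟨l', rfl, hl', hprod'⟩
    exact_mod_cast hk ▸ pexcPotential_le_length hl' hprod'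
  rw [this]

end PrefixExchange

theorem stmt0 (n : ℕ) (π : Equiv.Perm (Fin (n + 1))) :
    (pexcDist π : ℤ) = (n + 1 : ℤ) + c2 π - c1 π -
      (if π 0 = 0 then 0 else 2) :=
  pexcDist_eq_pexcPotential π
end
end

section
/- The maximum of the prefix exchange distance over all permutations of {1,…,n} equals ⌊3(n−1)/2⌋, for n ≥ 1. -/
open Equiv Finset Filter
open scoped Classical

noncomputable section

/-- The prefix exchange distance, given by the Akers–Krishnamurthy formula. -/
def pexc {n : ℕ} (π : Equiv.Perm (Fin n)) : ℕ :=
  n + c2 π - c1 π - (if ∀ i : Fin n, (i : ℕ) = 0 → π i = i then 0 else 2)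

/-- Whitney numbers of the second kind for the star poset. -/
def W (n k : ℕ) : ℕ :=
  (Finset.univ.filter fun π : Equiv.Perm (Fin n) => pexc π = k).card


/-!
Each cycle of length at least 2 has at least two points, so `2 * c2 π ≤ n - c1 π`; moreover
`c1 π ≥ 1` when `π` fixes `0`, while otherwise the formula subtracts 2. Either way
`pexc π ≤ 3 * (n - 1) / 2`. Equality holds for involutions with the fewest fixed points: the
reversal of `Fin (2 * m)`, and on `Fin (2 * m + 1)` the permutation fixing `0` and reversing the
remaining points.
-/

section CycleCounts

variable {n : ℕ} (π : Perm (Fin n))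

lemma c1_add_card_support : c1 π + #π.support = n := by
  have hsupp : π.support = univ.filter fun i => π i ≠ i := by
    ext i; simp [Perm.mem_support]
  rw [c1, hsupp, card_filter_add_card_filter_not, card_univ, Fintype.card_fin]

lemma two_mul_c2_le_card_support : 2 * c2 π ≤ #π.support := by
  rw [← π.sum_cycleType, c2, mul_comm, ← smul_eq_mul]
  exact Multiset.card_nsmul_le_sum fun _ => Perm.two_le_of_mem_cycleType

variable {π}

lemma two_mul_c2_eq_card_support (hπ : π ^ 2 = 1) : 2 * c2 π = #π.support := by
  have : Fact (Nat.Prime 2) := ⟨Nat.prime_two⟩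
  rw [← π.sum_cycleType, Perm.cycleType_of_pow_prime_eq_one hπ, Multiset.sum_replicate, c2,
    smul_eq_mul, mul_comm]

end CycleCounts

lemma pexc_le {n : ℕ} (π : Perm (Fin n)) : pexc π ≤ 3 * (n - 1) / 2 := by
  have hsupp := c1_add_card_support π
  have hc2 := two_mul_c2_le_card_support π
  rw [pexc]
  split_ifs with h0
  · rcases Nat.eq_zero_or_pos n with rfl | hn
    · omega
    · have : 1 ≤ c1 π := card_pos.mpr ⟨⟨0, hn⟩, by simp [h0 ⟨0, hn⟩ rfl]⟩
      omega
  · omega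

lemma Fin.rev_ne_self_of_two_mul {m : ℕ} (i : Fin (2 * m)) : i.rev ≠ i := fun h => by
  have := congrArg Fin.val h
  rw [Fin.val_rev] at this
  omega

lemma c1_revPerm_two_mul (m : ℕ) : c1 (Fin.revPerm : Perm (Fin (2 * m))) = 0 :=
  card_eq_zero.mpr (filter_eq_empty_iff.mpr fun i _ => Fin.rev_ne_self_of_two_mul i)

lemma pexc_revPerm_two_mul (m : ℕ) : pexc (Fin.revPerm : Perm (Fin (2 * m))) = 3 * m - 2 := by
  have hc2 := two_mul_c2_eq_card_support (π := (Fin.revPerm : Perm (Fin (2 * m))))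
    (by ext i; simp [sq])
  have hsupp := c1_add_card_support (Fin.revPerm : Perm (Fin (2 * m)))
  rw [c1_revPerm_two_mul] at hsupp
  rw [pexc, c1_revPerm_two_mul]
  split_ifs with h0
  · obtain rfl | hm := Nat.eq_zero_or_pos m
    · omega
    · exact absurd (h0 ⟨0, by omega⟩ rfl) (Fin.rev_ne_self_of_two_mul _)
  · omega

def revTailPerm (m : ℕ) : Perm (Fin (m + 1)) := Perm.decomposeFin.symm (0, Fin.revPerm)

@[simp]
lemma revTailPerm_zero (m : ℕ) : revTailPerm m 0 = 0 :=
  Perm.decomposeFin_symm_apply_zero _ _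

@[simp]
lemma revTailPerm_succ (m : ℕ) (i : Fin m) : revTailPerm m i.succ = i.rev.succ := by
  simp [revTailPerm, Perm.decomposeFin_symm_apply_succ]

lemma revTailPerm_sq (m : ℕ) : revTailPerm m ^ 2 = 1 := by
  ext i
  cases i using Fin.cases <;> simp [sq]

lemma c1_revTailPerm_two_mul (m : ℕ) : c1 (revTailPerm (2 * m)) = 1 := by
  refine card_eq_one.mpr ⟨0, eq_singleton_iff_unique_mem.mpr ⟨by simp, fun i hi => ?_⟩⟩
  cases i using Fin.cases with
  | zero => rfl
  | succ i =>
    rw [mem_filter, revTailPerm_succ, Fin.succ_inj] at hi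
    exact absurd hi.2 (Fin.rev_ne_self_of_two_mul i)

lemma pexc_revTailPerm_two_mul (m : ℕ) : pexc (revTailPerm (2 * m)) = 3 * m := by
  have hc2 := two_mul_c2_eq_card_support (revTailPerm_sq (2 * m))
  have hsupp := c1_add_card_support (revTailPerm (2 * m))
  rw [c1_revTailPerm_two_mul] at hsupp
  have hfix : ∀ i : Fin (2 * m + 1), (i : ℕ) = 0 → revTailPerm (2 * m) i = i := fun i hi => by
    rw [show i = 0 from Fin.ext hi, revTailPerm_zero]
  rw [pexc, c1_revTailPerm_two_mul, if_pos hfix]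
  omega

theorem stmt1_general (n : ℕ) :
    Finset.univ.sup (fun π : Equiv.Perm (Fin n) => pexc π) = 3 * (n - 1) / 2 := by
  refine le_antisymm (Finset.sup_le fun π _ => pexc_le π) ?_
  obtain ⟨m, rfl | rfl⟩ := Nat.even_or_odd' n
  · calc 3 * (2 * m - 1) / 2 = pexc (Fin.revPerm : Perm (Fin (2 * m))) := by
          rw [pexc_revPerm_two_mul]; omega
      _ ≤ _ := le_sup (mem_univ _)
  · calc 3 * (2 * m + 1 - 1) / 2 = pexc (revTailPerm (2 * m)) := by
          rw [pexc_revTailPerm_two_mul]; omega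
      _ ≤ _ := le_sup (mem_univ _)

theorem stmt1 (n : ℕ) (hn : 1 ≤ n) :
    Finset.univ.sup (fun π : Equiv.Perm (Fin n) => pexc π) = 3 * (n - 1) / 2 :=
  stmt1_general n
end
end

section
/- For n ≥ 1 and 3 ≤ k ≤ ⌊3(n−1)/2⌋, the Whitney numbers of the star poset satisfy W_{n,k} = W_{n−1,k} + (n−1)·W_{n−1,k−1} − (n−2)·W_{n−2,k−1} + (n−2)·W_{n−2,k−3}. -/
open Equiv Finset Filter
open scoped Classical

noncomputable section

/-!
Let `weight π = c₂(π) + |supp π|`. Then `pexc π = weight π` when `π` fixes `0` and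
`pexc π = weight π - 2` otherwise, so every `W n k` is an integer combination of the numbers
`weightCount n j` of permutations of `Fin n` of weight `j`.

Write a permutation as `swap a p * σ` with `σ a = a`. If `p` is another fixed point of `σ`, this
adds the transposition `(a p)` and the weight grows by `3`; if `σ` moves `p`, the point `a` is
inserted into the cycle of `p` and the weight grows by `1`. Counting both cases gives a recurrence
for `weightCount`, and three instances of it combine into the recurrence for `W`.
-/

theorem Equiv.Perm.extendDomain_symm_permCongr {α β : Type*} {p : α → Prop} [DecidablePred p]
    (f : β ≃ Subtype p) (g : Perm (Subtype p)) :
    (f.symm.permCongr g).extendDomain f = ofSubtype g := by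
  ext x
  by_cases hx : p x
  · simp [ofSubtype_apply_of_mem g hx, extendDomain_apply_subtype _ f hx, Equiv.permCongr_apply]
  · simp [ofSubtype_apply_of_not_mem g hx, extendDomain_apply_not_subtype _ f hx]

namespace StarPoset

open Equiv.Perm

section

variable {α : Type*} [Fintype α] [DecidableEq α]

def weight (σ : Perm α) : ℕ := σ.cycleType.card + #σ.support

theorem weight_mul_of_disjoint {σ τ : Perm α} (h : Disjoint σ τ) :
    weight (σ * τ) = weight σ + weight τ := by
  rw [weight, weight, weight, h.cycleType_mul, h.card_support_mul, Multiset.card_add]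
  ring

theorem weight_eq_of_isCycle {c : Perm α} (hc : c.IsCycle) : weight c = #c.support + 1 := by
  rw [weight, hc.cycleType, Multiset.card_singleton, add_comm]

theorem weight_extendDomain {β : Type*} [Fintype β] [DecidableEq β] {p : α → Prop}
    [DecidablePred p] (f : β ≃ Subtype p) (σ : Perm β) :
    weight (σ.extendDomain f) = weight σ := by
  rw [weight, weight, cycleType_extendDomain, card_support_extend_domain]

theorem weight_swap_mul_of_apply_eq {σ : Perm α} {a b : α} (hab : a ≠ b) (ha : σ a = a)
    (hb : σ b = b) : weight (swap a b * σ) = weight σ + 3 := by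
  have hdisj : Disjoint (swap a b) σ := by
    rw [disjoint_iff_disjoint_support, support_swap hab]
    simp [ha, hb]
  rw [weight_mul_of_disjoint hdisj, weight_eq_of_isCycle (isCycle_swap hab),
    card_support_swap hab]
  ring

theorem swap_mul_cycleOf_eq_formPerm {σ : Perm α} {a b : α} (hb : σ b ≠ b) :
    swap a b * σ.cycleOf b = (a :: toList σ b).formPerm := by
  obtain ⟨l, hl⟩ : ∃ l, toList σ b = b :: l := by
    rw [Equiv.Perm.toList, ← Nat.sub_add_cancel (card_pos.2 (support_cycleOf_nonempty.2 hb))]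
    exact ⟨_, rfl⟩
  rw [← formPerm_toList, hl, List.formPerm_cons_cons]

theorem weight_swap_mul_cycleOf {σ : Perm α} {a b : α} (ha : σ a = a) (hb : σ b ≠ b) :
    weight (swap a b * σ.cycleOf b) = weight (σ.cycleOf b) + 1 := by
  have ha_toList : a ∉ toList σ b := fun h =>
    hb ((mem_toList_iff.1 h).1.apply_eq_self_iff.2 ha)
  have hnodup : (a :: toList σ b).Nodup := List.nodup_cons.2 ⟨ha_toList, nodup_toList σ b⟩
  have hlen : 2 ≤ (a :: toList σ b).length := by
    rw [List.length_cons, Equiv.Perm.length_toList]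
    exact (two_le_card_support_cycleOf_iff.2 hb).trans (Nat.le_succ _)
  have hcard : #(a :: toList σ b).formPerm.support = #(σ.cycleOf b).support + 1 := by
    rw [List.support_formPerm_of_nodup _ hnodup (fun _ h => hb (by simp at h; exact h.2)),
      List.toFinset_card_of_nodup hnodup, List.length_cons, Equiv.Perm.length_toList]
  rw [swap_mul_cycleOf_eq_formPerm hb, weight_eq_of_isCycle (List.isCycle_formPerm hnodup hlen),
    weight_eq_of_isCycle (isCycle_cycleOf σ hb), hcard]

theorem weight_swap_mul_of_apply_ne {σ : Perm α} {a b : α} (ha : σ a = a) (hb : σ b ≠ b) :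
    weight (swap a b * σ) = weight σ + 1 := by
  set c := σ.cycleOf b
  set τ := σ * c⁻¹
  have hτc : Disjoint τ c :=
    disjoint_mul_inv_of_mem_cycleFactorsFinset (cycleOf_mem_cycleFactorsFinset_iff.2
      (mem_support.2 hb))
  have hσ : σ = τ * c := by simp [τ]
  have hdisj : Disjoint (swap a b * c) τ := by
    intro x
    by_cases hcx : c x = x
    · by_cases hxa : x = a
      · subst hxa
        right
        rw [show τ x = σ (c⁻¹ x) from rfl, Equiv.Perm.inv_eq_iff_eq.2 hcx.symm, ha]
      · have hxb : x ≠ b := fun h => hb (by rwa [h, cycleOf_apply_self] at hcx)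
        left
        simp [hcx, swap_apply_of_ne_of_ne hxa hxb]
    · exact .inr ((hτc x).resolve_right hcx)
  rw [hσ, hτc.commute.eq, ← mul_assoc, weight_mul_of_disjoint hdisj,
    weight_swap_mul_cycleOf ha hb, weight_mul_of_disjoint hτc.symm]
  ring

def weightCount (n j : ℕ) : ℕ := #{σ : Perm (Fin n) | weight σ = j}

theorem card_fixing_weight_eq (s : Finset α) (j : ℕ) :
    #{σ : Perm α | (∀ x ∈ s, σ x = x) ∧ weight σ = j} =
      weightCount (Fintype.card α - #s) j := by
  have hcard : Fintype.card {x // x ∉ s} = Fintype.card α - #s := by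
    simp [Fintype.card_subtype_compl]
  set f : Fin (Fintype.card α - #s) ≃ {x // x ∉ s} := (Fintype.equivFinOfCardEq hcard).symm
  symm
  refine card_bij (fun e _ => e.extendDomain f) (fun e he => ?_)
    (fun e₁ _ e₂ _ h => extendDomainHom_injective f h) (fun σ hσ => ?_)
  · simp only [mem_filter, mem_univ, true_and] at he ⊢
    exact ⟨fun x hx => extendDomain_apply_not_subtype e f (not_not.2 hx),
      (weight_extendDomain f e).trans he⟩
  · simp only [mem_filter, mem_univ, true_and] at hσ
    have hs (x : α) : σ x ∉ s ↔ x ∉ s := by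
      refine not_congr ⟨fun h => ?_, fun h => by rw [hσ.1 x h]; exact h⟩
      rwa [← σ.injective (hσ.1 _ h)]
    have hext : (f.symm.permCongr (σ.subtypePerm hs)).extendDomain f = σ := by
      rw [extendDomain_symm_permCongr, ofSubtype_subtypePerm]
      exact fun x hx hxs => hx (hσ.1 x hxs)
    refine ⟨_, ?_, hext⟩
    simp only [mem_filter, mem_univ, true_and]
    rw [← weight_extendDomain f, hext, hσ.2]

theorem card_moving_weight_eq (s : Finset α) {a : α} (ha : a ∉ s) (j : ℕ) :
    (#{σ : Perm α | (∀ x ∈ s, σ x = x) ∧ σ a ≠ a ∧ weight σ = j} : ℤ) =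
      weightCount (Fintype.card α - #s) j - weightCount (Fintype.card α - #s - 1) j := by
  have hsplit := card_filter_add_card_filter_not
    (s := {σ : Perm α | (∀ x ∈ s, σ x = x) ∧ weight σ = j}) (fun σ => σ a = a)
  have hfix := card_fixing_weight_eq (insert a s) j
  rw [card_insert_of_notMem ha, ← Nat.sub_sub] at hfix
  rw [filter_filter, filter_filter, card_fixing_weight_eq] at hsplit
  rw [← hfix, ← hsplit]
  simp only [forall_mem_insert, and_comm, and_left_comm, and_assoc, ne_eq]
  push_cast
  ring

theorem card_filter_eq_sum_swap_mul (a : α) (P : Perm α → Prop) [DecidablePred P] :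
    #{σ : Perm α | P σ} = ∑ p, #{σ : Perm α | σ a = a ∧ P (swap a p * σ)} := by
  rw [card_eq_sum_card_fiberwise (f := fun σ => σ a) (t := univ)
    (fun _ _ => mem_coe.2 (mem_univ _))]
  refine sum_congr rfl fun p _ => card_nbij' (swap a p * ·) (swap a p * ·) ?_ ?_ ?_ ?_
  all_goals simp only [coe_filter, mem_filter, mem_univ, true_and]
  · rintro σ ⟨hσ, rfl⟩
    exact ⟨by simp, by simpa⟩
  · rintro σ ⟨hσ, hP⟩
    exact ⟨hP, by simp [hσ]⟩
  all_goals exact fun σ _ => swap_mul_self_mul a p σ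

theorem card_fixing_swap_mul_weight_eq {a p : α} (hap : a ≠ p) (j : ℕ) :
    (#{σ : Perm α | σ a = a ∧ weight (swap a p * σ) = j + 3} : ℤ) =
      weightCount (Fintype.card α - 2) j + weightCount (Fintype.card α - 1) (j + 2)
        - weightCount (Fintype.card α - 2) (j + 2) := by
  have hsplit : univ.filter (fun σ : Perm α => σ a = a ∧ weight (swap a p * σ) = j + 3) =
      univ.filter (fun σ => (∀ x ∈ ({a, p} : Finset α), σ x = x) ∧ weight σ = j) ∪
        univ.filter (fun σ => (∀ x ∈ ({a} : Finset α), σ x = x) ∧ σ p ≠ p ∧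
          weight σ = j + 2) := by
    rw [← filter_or]
    refine filter_congr fun σ _ => ?_
    by_cases hp : σ p = p
    · by_cases ha : σ a = a <;> simp [ha, hp, weight_swap_mul_of_apply_eq hap]
    · by_cases ha : σ a = a <;> simp [ha, hp, weight_swap_mul_of_apply_ne]
  have hdisj : _root_.Disjoint
      (univ.filter fun σ : Perm α => (∀ x ∈ ({a, p} : Finset α), σ x = x) ∧ weight σ = j)
      (univ.filter fun σ => (∀ x ∈ ({a} : Finset α), σ x = x) ∧ σ p ≠ p ∧
        weight σ = j + 2) :=
    disjoint_filter.2 fun σ _ h h' => h'.2.1 (h.1 p (by simp))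
  rw [hsplit, card_union_of_disjoint hdisj, Nat.cast_add, card_fixing_weight_eq,
    card_moving_weight_eq _ (by simpa using hap.symm), card_pair hap, card_singleton,
    Nat.sub_sub]
  ring

end

theorem weightCount_add_two (N j : ℕ) :
    (weightCount (N + 2) (j + 3) : ℤ) = weightCount (N + 1) (j + 3)
      + (N + 1) * (weightCount N j + weightCount (N + 1) (j + 2) - weightCount N (j + 2)) := by
  have hfix := card_fixing_weight_eq ({0} : Finset (Fin (N + 2))) (j + 3)
  simp only [mem_singleton, forall_eq, Fintype.card_fin, card_singleton,
    Nat.add_succ_sub_one] at hfix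
  rw [weightCount, card_filter_eq_sum_swap_mul 0, Fin.sum_univ_succ, swap_self, ← Perm.one_def]
  simp only [one_mul, hfix, Nat.add_sub_cancel, Nat.cast_add, Nat.cast_sum,
    card_fixing_swap_mul_weight_eq (Fin.succ_ne_zero _).symm, sum_const, card_univ,
    Fintype.card_fin, nsmul_eq_mul]
  push_cast
  ring

theorem c1_add_card_support {n : ℕ} (π : Perm (Fin n)) : c1 π + #π.support = n := by
  have h := card_filter_add_card_filter_not (s := (univ : Finset (Fin n))) (fun i => π i = i)
  rwa [card_univ, Fintype.card_fin] at h

theorem pexc_eq_ite {N : ℕ} (π : Perm (Fin (N + 1))) :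
    pexc π = if π 0 = 0 then weight π else weight π - 2 := by
  have hcard := c1_add_card_support π
  have hzero : (∀ i : Fin (N + 1), (i : ℕ) = 0 → π i = i) ↔ π 0 = 0 :=
    ⟨fun h => h 0 rfl, fun h i hi => by obtain rfl : i = 0 := Fin.ext hi; exact h⟩
  simp only [pexc, hzero, weight, c2]
  split_ifs <;> omega

theorem pexc_eq_iff {N : ℕ} (π : Perm (Fin (N + 1))) (k : ℕ) :
    pexc π = k ↔ (π 0 = 0 ∧ weight π = k) ∨ (π 0 ≠ 0 ∧ weight π = k + 2) := by
  rw [pexc_eq_ite]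
  by_cases h0 : π 0 = 0
  · simp [h0]
  · have hπ : π ≠ 1 := fun h => h0 (by rw [h]; rfl)
    have h2 : 2 ≤ weight π := (one_lt_card_support_of_ne_one hπ).trans_le (Nat.le_add_left _ _)
    simp only [h0, if_false, ne_eq, not_false_eq_true, true_and, false_and, false_or]
    omega

theorem W_succ_eq (N k : ℕ) :
    (W (N + 1) k : ℤ) =
      weightCount N k + weightCount (N + 1) (k + 2) - weightCount N (k + 2) := by
  have hfix := card_fixing_weight_eq ({0} : Finset (Fin (N + 1))) k
  have hmove := card_moving_weight_eq (∅ : Finset (Fin (N + 1))) (notMem_empty 0) (k + 2)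
  simp only [mem_singleton, forall_eq, Fintype.card_fin, card_singleton, Nat.add_sub_cancel] at hfix
  simp only [notMem_empty, IsEmpty.forall_iff, implies_true, true_and,
    Fintype.card_fin, card_empty, Nat.add_sub_cancel, Nat.sub_zero] at hmove
  have hsplit : univ.filter (fun π : Perm (Fin (N + 1)) => pexc π = k) =
      univ.filter (fun π => π 0 = 0 ∧ weight π = k) ∪
        univ.filter (fun π => π 0 ≠ 0 ∧ weight π = k + 2) := by
    rw [← filter_or]
    exact filter_congr fun π _ => pexc_eq_iff π k
  have hdisj : _root_.Disjoint
      (univ.filter fun π : Perm (Fin (N + 1)) => π 0 = 0 ∧ weight π = k)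
      (univ.filter fun π => π 0 ≠ 0 ∧ weight π = k + 2) :=
    disjoint_filter.2 fun π _ h h' => h'.1 h.1
  rw [W, hsplit, card_union_of_disjoint hdisj, Nat.cast_add, hfix, hmove]
  ring

end StarPoset

theorem stmt3_general (n k : ℕ) (hk3 : 3 ≤ k) (hk : k ≤ 3 * (n - 1) / 2) :
    (W n k : ℤ) = W (n - 1) k + ((n : ℤ) - 1) * W (n - 1) (k - 1)
      - ((n : ℤ) - 2) * W (n - 2) (k - 1) + ((n : ℤ) - 2) * W (n - 2) (k - 3) := by
  obtain ⟨a, rfl⟩ : ∃ a, n = a + 3 := ⟨n - 3, by omega⟩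
  obtain ⟨b, rfl⟩ : ∃ b, k = b + 3 := ⟨k - 3, by omega⟩
  rw [show a + 3 - 1 = a + 2 by omega, show a + 3 - 2 = a + 1 by omega,
    show b + 3 - 1 = b + 2 by omega, show b + 3 - 3 = b by omega]
  simp only [StarPoset.W_succ_eq]
  linear_combination (norm := (push_cast; ring_nf))
    StarPoset.weightCount_add_two (a + 1) (b + 2) + StarPoset.weightCount_add_two a b
      - StarPoset.weightCount_add_two a (b + 2)

theorem stmt3 (n k : ℕ) (hn : 1 ≤ n) (hk3 : 3 ≤ k) (hk : k ≤ 3 * (n - 1) / 2) :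
    (W n k : ℤ) = W (n - 1) k + ((n : ℤ) - 1) * W (n - 1) (k - 1)
      - ((n : ℤ) - 2) * W (n - 2) (k - 1) + ((n : ℤ) - 2) * W (n - 2) (k - 3) :=
  stmt3_general n k hk3 hk
end
end

section
/- For n ≥ 1 and 3 ≤ k ≤ ⌊3(n−1)/2⌋, W_{n,k} = (n−1)·W_{n−1,k−1} + Σ_{j=1}^{n−2} j·W_{j,k−3}. -/
open Equiv Finset Filter
open scoped Classical

noncomputable section

/-!
Since `n - c₁ π = #supp π`, the distance is `#supp π + c₂ π - (0 if π d = d else 2)` for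
the distinguished point `d`; this form makes sense for permutations of any finite type.
Taking a point `x ≠ d` out of its cycle (`π ↦ swap x (π x) * π`) lowers this by `0` if `x` is
fixed, by `1` if `x` lies in a cycle of length at least `3` or in the transposition `(x d)`, and
by `3` if it lies in a transposition `(x y)` with `y ≠ d`. Sorting the permutations of `n + 1`
points by the image of `x`, and using that the permutations of `n` points fixing some `y ≠ d` are
the permutations of `n - 1` points, gives
`W (n+1) k = W n k + n W n (k-1) + (n-1) (W (n-1) (k-3) - W (n-1) (k-1))`.
This is exactly the difference of two consecutive instances of the recurrence, and for `n ≤ 2`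
all numbers in the recurrence vanish because `2 pexc π ≤ 3 (n - 1)`.
-/

namespace Equiv.Perm

variable {α : Type*} [Fintype α] [DecidableEq α]

theorem two_mul_card_cycleType_le_card_support (σ : Perm α) :
    2 * σ.cycleType.card ≤ #σ.support := by
  rw [← sum_cycleType, mul_comm]
  exact Multiset.card_nsmul_le_sum fun _ hm => two_le_of_mem_cycleType hm

theorem card_support_swap_mul_add_one {π : Perm α} {x : α} (hx : π x ≠ x)
    (hxx : π (π x) ≠ x) : #(swap x (π x) * π).support + 1 = #π.support := by
  rw [support_swap_mul_eq _ _ hxx, sdiff_singleton_eq_erase,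
    card_erase_add_one (mem_support.2 hx)]

theorem card_cycleType_swap_mul {π : Perm α} {x : α} (hx : π x ≠ x) (hxx : π (π x) ≠ x) :
    (swap x (π x) * π).cycleType.card = π.cycleType.card := by
  set c := π.cycleOf x
  have hc : c ∈ π.cycleFactorsFinset := cycleOf_mem_cycleFactorsFinset_iff.2 (mem_support.2 hx)
  have hcx : c x = π x := cycleOf_apply_self π x
  have hcxx : c (c x) = π (π x) := by rw [hcx, cycleOf_apply_apply_self]
  set ρ := π * c⁻¹
  have hρc : ρ.Disjoint c := disjoint_mul_inv_of_mem_cycleFactorsFinset hc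
  have hcycle : (swap x (c x) * c).IsCycle :=
    (mem_cycleFactorsFinset_iff.1 hc).1.swap_mul (hcx ▸ hx) (hcxx ▸ hxx)
  have hρc' : ρ.Disjoint (swap x (c x) * c) := by
    refine hρc.mono le_rfl ?_
    rw [support_swap_mul_eq _ _ (hcxx ▸ hxx)]
    exact sdiff_le
  have hπ : π = c * ρ := by rw [← hρc.commute.eq]; simp [ρ]
  have hswap : swap x (π x) * π = (swap x (c x) * c) * ρ := by rw [hcx, hπ, mul_assoc]
  rw [hswap, hρc'.symm.cycleType_mul, hπ, hρc.symm.cycleType_mul, hcycle.cycleType,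
    (mem_cycleFactorsFinset_iff.1 hc).1.cycleType]
  simp

theorem cycleType_eq_two_cons_swap_mul {π : Perm α} {x : α} (hx : π x ≠ x)
    (hxx : π (π x) = x) : π.cycleType = 2 ::ₘ (swap x (π x) * π).cycleType := by
  have hdisj : (swap x (π x)).Disjoint (swap x (π x) * π) := by
    intro y
    by_cases hy : y = x ∨ y = π x
    · right
      rcases hy with rfl | rfl <;> simp [hxx]
    · push Not at hy
      exact Or.inl (swap_apply_of_ne_of_ne hy.1 hy.2)
  have hπ : swap x (π x) * (swap x (π x) * π) = π := swap_mul_self_mul _ _ _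
  conv_lhs => rw [← hπ]
  rw [hdisj.cycleType_mul, (isCycle_swap hx.symm).cycleType, card_support_swap hx.symm]
  rfl

end Equiv.Perm

section PrefixExchange

variable {α β γ : Type*} [Fintype α] [DecidableEq α] [Fintype β] [DecidableEq β]
  [Fintype γ] [DecidableEq γ]

def pexcAt (d : α) (π : Perm α) : ℕ :=
  #π.support + π.cycleType.card - if π d = d then 0 else 2

def whitneyAt (d : α) (k : ℕ) : ℕ := #{π : Perm α | pexcAt d π = k}

theorem pexc_eq_pexcAt {n : ℕ} (π : Perm (Fin (n + 1))) : pexc π = pexcAt 0 π := by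
  have hcard : c1 π + #π.support = n + 1 :=
    (card_filter_add_card_filter_not (s := univ) (p := fun i => π i = i)).trans (by simp)
  have hflag : (∀ i : Fin (n + 1), (i : ℕ) = 0 → π i = i) ↔ π 0 = 0 :=
    ⟨fun h => h 0 rfl, fun h i hi => by obtain rfl : i = 0 := Fin.ext hi; exact h⟩
  rw [pexc, pexcAt, c2, if_congr hflag rfl rfl]
  omega

theorem pexcAt_extendDomain {p : β → Prop} [DecidablePred p] (f : α ≃ Subtype p) (d : α)
    (π : Perm α) : pexcAt (f d : β) (π.extendDomain f) = pexcAt d π := by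
  simp only [pexcAt, Perm.card_support_extend_domain, Perm.cycleType_extendDomain,
    Perm.extendDomain_apply_image, Subtype.coe_inj, f.apply_eq_iff_eq]

theorem pexcAt_permCongr (f : α ≃ β) (d : α) (π : Perm α) :
    pexcAt (f d) (f.permCongr π) = pexcAt d π := by
  have hext :
      f.permCongr π = π.extendDomain (f.trans (subtypeUnivEquiv fun _ => trivial).symm) := by
    ext b
    obtain ⟨a, rfl⟩ := f.surjective b
    rw [Perm.extendDomain_apply_subtype _ _ trivial]
    simp
  rw [hext]
  exact pexcAt_extendDomain _ d π

theorem pexcAt_optionCongr (d : α) (π : Perm α) :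
    pexcAt (some d) π.optionCongr = pexcAt d π := by
  have hext :
      π.optionCongr = π.extendDomain (ofInjective some (Option.some_injective α)) := by
    ext (_ | a)
    · simp [Perm.extendDomain_apply_not_subtype]
    · rw [Perm.extendDomain_apply_subtype _ _ (Set.mem_range_self a)]
      simp
  rw [hext]
  exact pexcAt_extendDomain _ d π

theorem whitneyAt_congr (f : α ≃ β) (d : α) (k : ℕ) : whitneyAt (f d) k = whitneyAt d k :=
  (card_equiv f.permCongr fun π => by simp [pexcAt_permCongr]).symm

theorem two_mul_pexcAt_le (d : α) (π : Perm α) :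
    2 * pexcAt d π ≤ 3 * (Fintype.card α - 1) := by
  have hc := π.two_mul_card_cycleType_le_card_support
  have hs : #π.support ≤ Fintype.card α := card_le_univ _
  unfold pexcAt
  split_ifs with hd
  · have : #π.support ≤ Fintype.card α - 1 := by
      rw [← card_univ, ← card_erase_of_mem (mem_univ d)]
      exact card_le_card fun y hy =>
        mem_erase.2 ⟨by rintro rfl; exact Perm.mem_support.1 hy hd, mem_univ y⟩
    omega
  · omega

theorem pexcAt_of_apply_apply_ne {d x : α} {π : Perm α} (hxd : x ≠ d) (hx : π x ≠ x)
    (hxx : π (π x) ≠ x) : pexcAt d π = pexcAt d (swap x (π x) * π) + 1 := by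
  have hsupp := Perm.card_support_swap_mul_add_one hx hxx
  have hcyc := Perm.card_cycleType_swap_mul hx hxx
  have hflag : (swap x (π x) * π) d = d ↔ π d = d := by
    simp only [Perm.mul_apply, swap_apply_def, π.injective.eq_iff]
    split_ifs <;> grind
  unfold pexcAt
  rw [if_congr hflag rfl rfl]
  split_ifs with hd
  · omega
  · have : 2 ≤ #(swap x (π x) * π).support :=
      Perm.two_le_card_support_of_ne_one fun h => hd (hflag.1 (by simp [h]))
    omega

theorem pexcAt_of_apply_apply_eq {d x : α} {π : Perm α} (hxd : x ≠ d) (hx : π x ≠ x)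
    (hxx : π (π x) = x) :
    pexcAt d π = pexcAt d (swap x (π x) * π) + if π x = d then 1 else 3 := by
  have hcyc := Perm.cycleType_eq_two_cons_swap_mul hx hxx
  have hsupp : #π.support = #(swap x (π x) * π).support + 2 := by
    rw [← Perm.sum_cycleType, ← Perm.sum_cycleType, hcyc, Multiset.sum_cons, add_comm]
  unfold pexcAt
  rw [hsupp, hcyc, Multiset.card_cons]
  by_cases hxd' : π x = d
  · have hπd : π d = x := hxd' ▸ hxx
    have hd : (swap x (π x) * π) d = d := by simp [hπd, hxd']
    have hπd' : π d ≠ d := hπd ▸ hxd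
    rw [hd, if_pos rfl, if_pos hxd', if_neg hπd']
    omega
  · have hπd : π d ≠ x := fun h => hxd' (π.injective (h.trans hxx.symm)).symm
    have hflag : (swap x (π x) * π) d = π d := by
      simp only [Perm.mul_apply, swap_apply_def, π.injective.eq_iff]
      split_ifs <;> grind
    rw [hflag, if_neg hxd']
    split_ifs with hd
    · omega
    · have : 2 ≤ #(swap x (π x) * π).support :=
        Perm.two_le_card_support_of_ne_one fun h => hd (by simpa [h] using hflag.symm)
      omega

theorem pexcAt_decomposeOption_symm_none (d : α) (e : Perm α) :
    pexcAt (some d) (Perm.decomposeOption.symm (none, e)) = pexcAt d e := by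
  simp [← Perm.one_def, pexcAt_optionCongr]

theorem pexcAt_decomposeOption_symm_some (d q : α) (e : Perm α) :
    pexcAt (some d) (Perm.decomposeOption.symm (some q, e)) =
      pexcAt d e + if e q = q ∧ q ≠ d then 3 else 1 := by
  set π := Perm.decomposeOption.symm (some q, e)
  have hπ : π none = some q := by simp [π]
  have hrem : swap none (π none) * π = e.optionCongr := by simp [π]
  have hπq : π (some q) = none ↔ e q = q := by simp [π, swap_apply_def]
  have hnone : (none : Option α) ≠ some d := (Option.some_ne_none d).symm
  by_cases hq : e q = q
  · rw [pexcAt_of_apply_apply_eq hnone (by simp [hπ]) (by rw [hπ, hπq.2 hq]),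
      hrem, pexcAt_optionCongr, hπ]
    simp [hq]
  · rw [pexcAt_of_apply_apply_ne hnone (by simp [hπ]) (by rwa [hπ, ne_eq, hπq]),
      hrem, pexcAt_optionCongr]
    simp [hq]

theorem card_filter_perm_option (P : Perm (Option α) → Prop) [DecidablePred P] :
    #{π | P π} = ∑ p : Option α, #{e : Perm α | P (Perm.decomposeOption.symm (p, e))} := by
  rw [card_equiv Perm.decomposeOption (t := {x | P (Perm.decomposeOption.symm x)})
    fun π => by simp, card_filter, Fintype.sum_prod_type]
  simp_rw [card_filter]

theorem whitneyAt_some (d : α) (k : ℕ) :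
    whitneyAt (some d) k = whitneyAt d k +
      ∑ q : α, #{e : Perm α | pexcAt d e + (if e q = q ∧ q ≠ d then 3 else 1) = k} := by
  simp only [whitneyAt, card_filter_perm_option, Fintype.sum_option,
    pexcAt_decomposeOption_symm_none, pexcAt_decomposeOption_symm_some]

theorem card_filter_pexcAt_add_eq {k : ℕ} (hk : 3 ≤ k) (d q : α) :
    (#{e : Perm α | pexcAt d e + (if e q = q ∧ q ≠ d then 3 else 1) = k} : ℤ) =
      whitneyAt d (k - 1) + if q = d then 0 else
        (#{e : Perm α | e q = q ∧ pexcAt d e = k - 3} : ℤ) -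
          #{e : Perm α | e q = q ∧ pexcAt d e = k - 1} := by
  have hsplit (P : Perm α → Prop) [DecidablePred P] :
      #{e | P e} = #{e | e q = q ∧ P e} + #{e | ¬ e q = q ∧ P e} := by
    rw [← card_filter_add_card_filter_not (s := {e | P e}) (p := fun e => e q = q),
      filter_filter, filter_filter]
    simp only [and_comm]
  have hmoved :
      #{e : Perm α | ¬ e q = q ∧ pexcAt d e + (if e q = q ∧ q ≠ d then 3 else 1) = k} =
        #{e : Perm α | ¬ e q = q ∧ pexcAt d e = k - 1} :=
    congrArg card <| filter_congr fun e _ => by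
      simp only [and_congr_right_iff]
      intro h
      rw [if_neg fun h' => h h'.1]
      omega
  have hfixed :
      #{e : Perm α | e q = q ∧ pexcAt d e + (if e q = q ∧ q ≠ d then 3 else 1) = k} =
        #{e : Perm α | e q = q ∧ pexcAt d e = k - if q = d then 1 else 3} :=
    congrArg card <| filter_congr fun e _ => by
      simp only [and_congr_right_iff]
      intro h
      by_cases hqd : q = d
      · rw [if_neg fun h' => h'.2 hqd, if_pos hqd]; omega
      · rw [if_pos ⟨h, hqd⟩, if_neg hqd]; omega
  rw [hsplit, hmoved, hfixed, whitneyAt, hsplit (fun e => pexcAt d e = k - 1)]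
  split_ifs <;> push_cast <;> ring

theorem card_fixing_pexcAt_eq_whitneyAt (c : γ) {q : Option γ} (hq : q ≠ some c) (t : ℕ) :
    #{e : Perm (Option γ) | e q = q ∧ pexcAt (some c) e = t} = whitneyAt c t := by
  set σ := swap none q
  have hσc : σ (some c) = some c := swap_apply_of_ne_of_ne (Option.some_ne_none c) hq.symm
  have hconj : #{e : Perm (Option γ) | e q = q ∧ pexcAt (some c) e = t} =
      #{e : Perm (Option γ) | e none = none ∧ pexcAt (some c) e = t} :=
    card_equiv σ.permCongr fun e => by
      have hfix : σ.permCongr e none = none ↔ e q = q := by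
        simp [σ, swap_apply_eq_iff]
      have hpexc : pexcAt (some c) (σ.permCongr e) = pexcAt (some c) e := by
        simpa only [hσc] using pexcAt_permCongr σ (some c) e
      simp only [mem_filter, mem_univ, true_and, hfix, hpexc]
  rw [hconj, card_filter_perm_option, Fintype.sum_option, whitneyAt]
  simp [← Perm.one_def, pexcAt_optionCongr]

theorem whitneyAt_some_some (c : γ) {k : ℕ} (hk : 3 ≤ k) :
    (whitneyAt (some (some c)) k : ℤ) = whitneyAt (some c) k +
      (Fintype.card γ + 1) * whitneyAt (some c) (k - 1) +
        Fintype.card γ * ((whitneyAt c (k - 3) : ℤ) - whitneyAt c (k - 1)) := by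
  have hfixed : ∑ q : Option γ, (if q = some c then 0 else
      (#{e : Perm (Option γ) | e q = q ∧ pexcAt (some c) e = k - 3} : ℤ) -
        #{e : Perm (Option γ) | e q = q ∧ pexcAt (some c) e = k - 1}) =
      ∑ _q ∈ univ.erase (some c), ((whitneyAt c (k - 3) : ℤ) - whitneyAt c (k - 1)) := by
    rw [← add_sum_erase _ _ (mem_univ (some c)), if_pos rfl, zero_add]
    refine sum_congr rfl fun q hq => ?_
    rw [if_neg (ne_of_mem_erase hq), card_fixing_pexcAt_eq_whitneyAt c (ne_of_mem_erase hq),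
      card_fixing_pexcAt_eq_whitneyAt c (ne_of_mem_erase hq)]
  rw [whitneyAt_some, Nat.cast_add, Nat.cast_sum,
    sum_congr rfl fun q _ => card_filter_pexcAt_add_eq hk (some c) q, sum_add_distrib, hfixed]
  simp [card_erase_of_mem]
  ring

end PrefixExchange

theorem W_succ_eq_whitneyAt {α : Type*} [Fintype α] [DecidableEq α] {m : ℕ} (d : α)
    (hα : Fintype.card α = m + 1) (t : ℕ) : W (m + 1) t = whitneyAt d t := by
  let e := (Fintype.equivFinOfCardEq hα).symm
  have hW : W (m + 1) t = whitneyAt (0 : Fin (m + 1)) t := by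
    simp only [W, whitneyAt, pexc_eq_pexcAt]
  rw [hW, ← whitneyAt_congr (e.trans (swap (e 0) d)) 0 t]
  simp

theorem W_zero {t : ℕ} (ht : t ≠ 0) : W 0 t = 0 := by
  simp [W, pexc, c2, Subsingleton.elim _ (1 : Perm (Fin 0)), ht.symm]

theorem W_succ_eq_zero {m t : ℕ} (h : 3 * m < 2 * t) : W (m + 1) t = 0 := by
  rw [W_succ_eq_whitneyAt (0 : Fin (m + 1)) (Fintype.card_fin _), whitneyAt,
    card_eq_zero, filter_eq_empty_iff]
  intro π _ hπ
  have := two_mul_pexcAt_le 0 π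
  simp only [Fintype.card_fin, add_tsub_cancel_right] at this
  omega

theorem W_recurrence (r : ℕ) {k : ℕ} (hk : 3 ≤ k) :
    (W (r + 3) k : ℤ) = W (r + 2) k + (r + 2) * W (r + 2) (k - 1) +
      (r + 1) * ((W (r + 1) (k - 3) : ℤ) - W (r + 1) (k - 1)) := by
  have h := whitneyAt_some_some (0 : Fin (r + 1)) hk
  simp only [Fintype.card_fin,
    ← W_succ_eq_whitneyAt (m := r + 2) (some (some (0 : Fin (r + 1)))) (by simp),
    ← W_succ_eq_whitneyAt (m := r + 1) (some (0 : Fin (r + 1))) (by simp),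
    ← W_succ_eq_whitneyAt (m := r) (0 : Fin (r + 1)) (by simp)] at h
  push_cast at h
  linarith

theorem stmt4_general (n k : ℕ) (hk3 : 3 ≤ k) :
    (W n k : ℤ) = ((n : ℤ) - 1) * W (n - 1) (k - 1)
      + ∑ j ∈ Finset.Icc 1 (n - 2), (j : ℤ) * W j (k - 3) := by
  induction n with
  | zero => simp [W_zero (by omega : k ≠ 0), W_zero (by omega : k - 1 ≠ 0)]
  | succ n ih =>
    rcases n with _ | _ | r
    · simp [W_succ_eq_zero (by omega : 3 * 0 < 2 * k)]
    · simp [W_succ_eq_zero (by omega : 3 * 1 < 2 * k),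
        W_succ_eq_zero (by omega : 3 * 0 < 2 * (k - 1))]
    · rw [W_recurrence r hk3, ih]
      simp only [Nat.add_sub_cancel, show r + 1 + 1 + 1 - 2 = r + 1 by omega,
        show r + 1 + 1 - 2 = r by omega]
      rw [sum_Icc_succ_top (by omega : 1 ≤ r + 1)]
      push_cast
      ring

theorem stmt4 (n k : ℕ) (hn : 1 ≤ n) (hk3 : 3 ≤ k) (hk : k ≤ 3 * (n - 1) / 2) :
    (W n k : ℤ) = ((n : ℤ) - 1) * W (n - 1) (k - 1)
      + ∑ j ∈ Finset.Icc 1 (n - 2), (j : ℤ) * W j (k - 3) :=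
  stmt4_general n k hk3
end
end

section
/- For n ≥ 1 and 0 ≤ k ≤ ⌊3(n−1)/2⌋, W_{n+k+1,k} = Σ_{i=1}^{k+1} (−1)^{i+1} · C(k+1, i) · W_{n+k+1−i, k}. -/
open Equiv Finset Filter
open scoped Classical

noncomputable section

/-!
A permutation of `Fin (m + 1)` is a derangement of its support `S`, and its prefix exchange
distance is `#S + #cycles`, minus `2` when `0 ∈ S`. Grouping permutations by their support
therefore writes `W (x + 1) k` as `∑ s, x.choose s * a s`, where `a s` counts derangements of
`s` and `s + 1` points by `s + #cycles`; as a derangement of `s > 0` points has a cycle, `a s = 0`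
for `s > k`. Such a function of `x` has vanishing `(k + 1)`-st forward difference, and expanding
that difference is the recurrence.
-/

theorem fwdDiff_iter_sum_choose_mul_eq_zero (n : ℕ) (a : ℕ → ℤ) :
    (fwdDiff 1)^[n] (fun x : ℕ ↦ ∑ s ∈ range n, (x.choose s : ℤ) * a s) = 0 := by
  simp_rw [← sum_apply _ _ (fun s (x : ℕ) ↦ (x.choose s : ℤ) * a s), fwdDiff_iter_finsetSum]
  refine sum_eq_zero fun s hs ↦ ?_
  obtain ⟨j, rfl⟩ := Nat.exists_eq_add_of_lt (mem_range.mp hs)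
  have hconst : (fwdDiff 1)^[s] (fun x : ℕ ↦ (x.choose s : ℤ) * a s) = fun _ ↦ a s := by
    have hsmul : (fun x : ℕ ↦ (x.choose s : ℤ) * a s) =
        a s • fun x : ℕ ↦ (x.choose (s + 0) : ℤ) := by
      ext x; simp [mul_comm]
    rw [hsmul, fwdDiff_iter_const_smul, fwdDiff_iter_choose]
    ext x; simp
  rw [add_assoc, add_comm, Function.iterate_add_apply, hconst, Function.iterate_succ_apply,
    fwdDiff_const]
  exact Function.iterate_fixed (fwdDiff_const 1 (0 : ℤ)) j

theorem fwdDiff_iter_eq_sum_shift_rev {G : Type*} [AddCommGroup G] (f : ℕ → G) (n y : ℕ) :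
    (fwdDiff 1)^[n] f y =
      ∑ i ∈ range (n + 1), ((-1 : ℤ) ^ i * n.choose i) • f (y + (n - i)) := by
  rw [fwdDiff_iter_eq_sum_shift, ← sum_range_reflect]
  refine sum_congr rfl fun i hi ↦ ?_
  have hi : i ≤ n := Nat.lt_succ_iff.mp (mem_range.mp hi)
  rw [Nat.add_sub_cancel, Nat.sub_sub_self hi, Nat.choose_symm hi, smul_eq_mul, mul_one]

theorem sum_range_choose_mul_eq_of_eq_zero {R : Type*} [Semiring R] {k : ℕ} {a : ℕ → R}
    (ha : ∀ s, k < s → a s = 0) (x : ℕ) :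
    ∑ s ∈ range (x + 1), (x.choose s : R) * a s =
      ∑ s ∈ range (k + 1), (x.choose s : R) * a s := by
  have hext {m : ℕ} (hm : m = x ∨ m = k) : ∑ s ∈ range (m + 1), (x.choose s : R) * a s
      = ∑ s ∈ range (x + k + 1), (x.choose s : R) * a s := by
    refine sum_subset (range_subset_range.mpr (by omega)) fun s _ hs ↦ ?_
    rw [mem_range] at hs
    rcases hm with rfl | rfl
    · rw [Nat.choose_eq_zero_of_lt (by omega), Nat.cast_zero, zero_mul]
    · rw [ha s (by omega), mul_zero]
  rw [hext (.inl rfl), hext (.inr rfl)]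

theorem eq_sum_Icc_of_fwdDiff_iter_eq_zero {G : Type*} [AddCommGroup G] {f : ℕ → G} {K y : ℕ}
    (h : (fwdDiff 1)^[K + 1] f y = 0) :
    f (y + K + 1) =
      ∑ i ∈ Icc 1 (K + 1), ((-1 : ℤ) ^ (i + 1) * (K + 1).choose i) • f (y + K + 1 - i) := by
  rw [fwdDiff_iter_eq_sum_shift_rev, sum_range_succ', Nat.sub_zero, pow_zero, Nat.choose_zero_right,
    Nat.cast_one, one_mul, one_smul, ← add_assoc] at h
  rw [eq_neg_of_add_eq_zero_right h, ← Ico_add_one_right_eq_Icc, sum_Ico_eq_sum_range,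
    Nat.add_sub_cancel, ← sum_neg_distrib]
  refine sum_congr rfl fun i hi ↦ ?_
  have hi : i < K + 1 := mem_range.mp hi
  rw [add_comm 1 i, show y + K + 1 - (i + 1) = y + (K + 1 - (i + 1)) by omega,
    pow_succ _ (i + 1), mul_neg_one, neg_mul, neg_smul]

namespace Equiv.Perm

theorem ofSubtype_permCongr_eq_extendDomain {α β : Type*} {p : α → Prop} [DecidablePred p]
    (f : β ≃ Subtype p) (σ : Perm β) : ofSubtype (permCongr f σ) = σ.extendDomain f := by
  ext x
  by_cases hx : p x
  · rw [ofSubtype_apply_of_mem _ hx, extendDomain_apply_subtype _ _ hx]; simp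
  · rw [ofSubtype_apply_of_not_mem _ hx, extendDomain_apply_not_subtype _ _ hx]

theorem card_filter_support_eq_and_cycleType {α : Type*} [Fintype α] [DecidableEq α]
    (S : Finset α) (p : Multiset ℕ → Prop) [DecidablePred p] :
    #{π : Perm α | π.support = S ∧ p π.cycleType} =
      #{σ : Perm (Fin #S) | σ.support = univ ∧ p σ.cycleType} := by
  set f : Fin #S ≃ {x // x ∈ S} := S.equivFin.symm
  have hmap : (univ : Finset (Fin #S)).map f.asEmbedding = S := by
    ext x
    simpa using
      ⟨fun ⟨a, ha⟩ ↦ ha ▸ (f a).2, fun hx ↦ ⟨f.symm ⟨x, hx⟩, by simp⟩⟩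
  let E : Perm (Fin #S) ≃ {π : Perm α // ∀ a, a ∉ S → π a = a} :=
    (permCongr f).trans (Perm.subtypeEquivSubtypePerm _)
  have hE (σ : Perm (Fin #S)) : (E σ : Perm α) = σ.extendDomain f :=
    ofSubtype_permCongr_eq_extendDomain f σ
  rw [← Fintype.card_subtype, ← Fintype.card_subtype]
  symm
  refine Fintype.card_congr ((E.subtypeEquiv fun σ ↦ ?_).trans
    (subtypeSubtypeEquivSubtype fun hπ a ha ↦ notMem_support.mp (hπ.1 ▸ ha)))
  have hsupp : σ.support.map f.asEmbedding = S ↔ σ.support = univ := by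
    rw [← map_inj (f := f.asEmbedding), hmap]
  rw [hE, support_extend_domain, cycleType_extendDomain, hsupp]

end Equiv.Perm

open Equiv.Perm

def numDerangementsWeight (s j : ℕ) : ℕ :=
  #{σ : Perm (Fin s) | σ.support = univ ∧ s + σ.cycleType.card = j}

theorem numDerangementsWeight_eq_zero {s j : ℕ} (hs : 0 < s) (hj : j ≤ s) :
    numDerangementsWeight s j = 0 := by
  refine card_eq_zero.mpr (filter_eq_empty_iff.mpr fun σ _ ⟨hσ, hw⟩ ↦ ?_)
  have hσ1 : σ ≠ 1 := by
    rintro rfl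
    rw [support_one] at hσ
    exact (univ_nonempty_iff.mpr ⟨⟨0, hs⟩⟩).ne_empty hσ.symm
  have := Multiset.card_pos.mpr (cycleType_eq_zero.not.mpr hσ1)
  omega

theorem pexc_add_ite {m : ℕ} (π : Perm (Fin (m + 1))) :
    pexc π + (if π 0 = 0 then 0 else 2) = #π.support + π.cycleType.card := by
  have hc1 : c1 π + #π.support = m + 1 := by
    rw [c1, support, card_filter_add_card_filter_not, card_univ, Fintype.card_fin]
  have hfix : (∀ i : Fin (m + 1), (i : ℕ) = 0 → π i = i) ↔ π 0 = 0 :=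
    ⟨fun h ↦ h 0 rfl, fun h i hi ↦ (Fin.ext hi : i = 0) ▸ h⟩
  rw [pexc, c2, if_congr hfix rfl rfl]
  split_ifs with h0
  · omega
  · have := two_le_card_support_of_ne_one fun h1 : π = 1 ↦ h0 (by rw [h1, one_apply])
    omega

theorem card_filter_pexc_support {m : ℕ} (k : ℕ) (S : Finset (Fin (m + 1))) :
    #{π : Perm (Fin (m + 1)) | pexc π = k ∧ π.support = S} =
      numDerangementsWeight #S (k + if 0 ∈ S then 2 else 0) := by
  calc #{π : Perm (Fin (m + 1)) | pexc π = k ∧ π.support = S}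
      = #{π : Perm (Fin (m + 1)) | π.support = S ∧
          #S + π.cycleType.card = k + if 0 ∈ S then 2 else 0} := by
        refine congrArg card (filter_congr fun π _ ↦ ?_)
        rw [and_comm]
        refine and_congr_right fun hS ↦ ?_
        subst hS
        have := pexc_add_ite π
        simp only [mem_support, ne_eq, ite_not] at this ⊢
        split_ifs at * <;> omega
    _ = numDerangementsWeight #S (k + if 0 ∈ S then 2 else 0) :=
        card_filter_support_eq_and_cycleType S fun c ↦ #S + c.card = k + if 0 ∈ S then 2 else 0

theorem W_succ (m k : ℕ) :
    W (m + 1) k = ∑ s ∈ range (m + 1),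
      m.choose s * (numDerangementsWeight s k + numDerangementsWeight (s + 1) (k + 2)) := by
  have hcard : #(univ.erase (0 : Fin (m + 1))) = m := by simp
  have h0 {T : Finset (Fin (m + 1))} (hT : T ∈ (univ.erase 0).powerset) : 0 ∉ T :=
    fun h ↦ notMem_erase 0 univ (mem_powerset.mp hT h)
  have hfixed : ∑ T ∈ (univ.erase (0 : Fin (m + 1))).powerset,
      numDerangementsWeight #T (k + if 0 ∈ T then 2 else 0) =
        ∑ s ∈ range (m + 1), m.choose s • numDerangementsWeight s k := by
    rw [sum_congr rfl fun T hT ↦ by rw [if_neg (h0 hT), add_zero],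
      sum_powerset_apply_card (fun s ↦ numDerangementsWeight s k), hcard]
  have hmoved : ∑ T ∈ (univ.erase (0 : Fin (m + 1))).powerset,
      numDerangementsWeight #(insert 0 T) (k + if 0 ∈ insert 0 T then 2 else 0) =
        ∑ s ∈ range (m + 1), m.choose s • numDerangementsWeight (s + 1) (k + 2) := by
    rw [sum_congr rfl fun T hT ↦ by
        rw [if_pos (mem_insert_self 0 T), card_insert_of_notMem (h0 hT)],
      sum_powerset_apply_card (fun s ↦ numDerangementsWeight (s + 1) (k + 2)), hcard]
  unfold W
  rw [card_eq_sum_card_fiberwise (f := support) (t := univ.powerset) (by simp),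
    ← insert_erase (mem_univ (0 : Fin (m + 1))), sum_powerset_insert (notMem_erase 0 univ)]
  simp_rw [filter_filter, card_filter_pexc_support]
  rw [hfixed, hmoved, ← sum_add_distrib]
  simp only [smul_eq_mul, mul_add]

theorem W_succ_eq_sum_range (k x : ℕ) :
    (W (x + 1) k : ℤ) = ∑ s ∈ range (k + 1), (x.choose s : ℤ) *
      (numDerangementsWeight s k + numDerangementsWeight (s + 1) (k + 2) : ℕ) := by
  rw [W_succ, Nat.cast_sum]
  simp_rw [Nat.cast_mul]
  refine sum_range_choose_mul_eq_of_eq_zero (fun s hs ↦ ?_) x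
  rw [numDerangementsWeight_eq_zero (by omega) hs.le,
    numDerangementsWeight_eq_zero (by omega) (by omega), Nat.cast_zero]

theorem stmt5_general (n k : ℕ) (hn : 1 ≤ n) :
    (W (n + k + 1) k : ℤ) =
      ∑ i ∈ Finset.Icc 1 (k + 1),
        (-1 : ℤ) ^ (i + 1) * (k + 1).choose i * W (n + k + 1 - i) k := by
  have hΔ : (fwdDiff 1)^[k + 1] (fun x ↦ (W x k : ℤ)) n = 0 := by
    obtain ⟨y, rfl⟩ : ∃ y, n = y + 1 := ⟨n - 1, by omega⟩
    rw [← fwdDiff_iter_comp_add, funext (W_succ_eq_sum_range k)]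
    exact congrFun (fwdDiff_iter_sum_choose_mul_eq_zero _ _) y
  simpa only [smul_eq_mul] using eq_sum_Icc_of_fwdDiff_iter_eq_zero hΔ

theorem stmt5 (n k : ℕ) (hn : 1 ≤ n) (hk : k ≤ 3 * (n - 1) / 2) :
    (W (n + k + 1) k : ℤ) =
      ∑ i ∈ Finset.Icc 1 (k + 1),
        (-1 : ℤ) ^ (i + 1) * (k + 1).choose i * W (n + k + 1 - i) k :=
  stmt5_general n k hn
end
end

section
/- For n ≥ 1 and any k, the number of permutations π ∈ Sₙ with pexc(π) = k and π(1) ≠ 1 equals (n−1) times the number of permutations σ ∈ S_{n−1} with pexc(σ) = k−1. -/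
open Equiv Finset Filter
open scoped Classical

noncomputable section

/-! Write `π ∈ S_{s+2}` with `π 0 = p.succ` as `swap 0 p.succ * τ`, where `τ` fixes `0` and
restricts to `σ ∈ S_{s+1}` (`decomposeFin`). Since `n - c₁ = #support`, `pexc` is `#support + c₂`
minus the correction `2` when `0` is moved. Putting `0` back into the cycle of `p.succ` adds two
points and one cycle when `σ` fixes `p`, and one point otherwise. Conjugating `σ` by `swap 0 p`
turns "`σ` fixes `p`" into "`σ` fixes `0`", which is exactly the correction term, so
`pexc π = pexc (swap 0 p * σ * swap 0 p) + 1`; for each of the `s + 1` values of `p` this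
conjugation is a bijection onto the permutations with `pexc = k - 1`. -/

namespace Equiv.Perm

variable {α : Type*} [DecidableEq α] {f τ : Perm α} {x y : α}

theorem disjoint_swap_of_apply_eq_self (hτx : τ x = x) (hτy : τ y = y) :
    Disjoint (swap x y) τ := fun z => by
  by_cases hz : z = x ∨ z = y
  · rcases hz with rfl | rfl <;> simp [hτx, hτy]
  · push Not at hz
    exact Or.inl (swap_apply_of_ne_of_ne hz.1 hz.2)

theorem swap_mul_apply_apply_ne_of_apply_eq_self (hτx : τ x = x) (hxy : x ≠ y)
    (hτy : τ y ≠ y) :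
    (swap x y * τ) ((swap x y * τ) x) ≠ x := by
  have hτyx : τ y ≠ x := fun h => hxy (τ.injective (hτx.trans h.symm))
  simpa [hτx, swap_apply_of_ne_of_ne hτyx hτy] using hτyx

variable [Fintype α]

theorem card_cycleType_swap_mul_of_apply_apply_ne (hx : f x ≠ x) (hffx : f (f x) ≠ x) :
    (swap x (f x) * f).cycleType.card = f.cycleType.card := by
  set c := f.cycleOf x
  have hc : c.IsCycle := f.isCycle_cycleOf hx
  have hcx : c x = f x := f.cycleOf_apply_self x
  have hcfx : c (f x) = f (f x) := (sameCycle_apply_right.2 SameCycle.rfl).cycleOf_apply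
  have hmem : c ∈ f.cycleFactorsFinset :=
    cycleOf_mem_cycleFactorsFinset_iff.2 (mem_support.2 hx)
  have hrest : Disjoint (f * c⁻¹) c := disjoint_mul_inv_of_mem_cycleFactorsFinset hmem
  have hcut_supp : (swap x (c x) * c).support = c.support \ {x} :=
    support_swap_mul_eq _ _ (by rwa [hcx, hcfx])
  have hcut : (swap x (c x) * c).IsCycle := hc.swap_mul (hcx ▸ hx) (by rwa [hcx, hcfx])
  have hcut_rest : Disjoint (swap x (c x) * c) (f * c⁻¹) :=
    hrest.symm.mono (hcut_supp ▸ sdiff_subset) le_rfl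
  have hf : f = c * (f * c⁻¹) := by rw [← hrest.commute.eq, inv_mul_cancel_right]
  have hc_le : c.cycleType ≤ f.cycleType := cycleType_le_of_mem_cycleFactorsFinset hmem
  calc (swap x (f x) * f).cycleType.card
      = ((swap x (c x) * c) * (f * c⁻¹)).cycleType.card := by
        rw [hcx, mul_assoc, ← hf]
    _ = 1 + (f.cycleType.card - c.cycleType.card) := by
        rw [hcut_rest.cycleType_mul, hcut.cycleType, Multiset.card_add, Multiset.card_singleton,
          cycleType_mul_inv_mem_cycleFactorsFinset_eq_sub hmem, Multiset.card_sub hc_le]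
    _ = f.cycleType.card := by
        have := Multiset.card_le_card hc_le
        rw [hc.cycleType, Multiset.card_singleton] at this ⊢
        omega

theorem card_support_swap_mul_of_apply_eq_self (hτx : τ x = x) (hxy : x ≠ y) :
    #(swap x y * τ).support = #τ.support + if τ y = y then 2 else 1 := by
  split_ifs with hτy
  · have hd := disjoint_swap_of_apply_eq_self hτx hτy
    rw [hd.card_support_mul, card_support_swap hxy, add_comm]
  · have hsupp := support_swap_mul_eq (swap x y * τ) x
      (swap_mul_apply_apply_ne_of_apply_eq_self hτx hxy hτy)
    have hx : x ∈ (swap x y * τ).support := by simp [hτx, hxy.symm]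
    simp only [mul_apply, hτx, swap_apply_left, swap_mul_self_mul] at hsupp
    rw [hsupp, card_sdiff_of_subset (singleton_subset_iff.2 hx), card_singleton]
    have := card_pos.2 ⟨x, hx⟩
    omega

theorem card_cycleType_swap_mul_of_apply_eq_self (hτx : τ x = x) (hxy : x ≠ y) :
    (swap x y * τ).cycleType.card = τ.cycleType.card + if τ y = y then 1 else 0 := by
  split_ifs with hτy
  · have hd := disjoint_swap_of_apply_eq_self hτx hτy
    rw [hd.cycleType_mul, (isCycle_swap hxy).cycleType, Multiset.card_add,
      Multiset.card_singleton, add_comm]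
  · have := card_cycleType_swap_mul_of_apply_apply_ne (f := swap x y * τ) (x := x)
      (by simp [hτx, hxy.symm]) (swap_mul_apply_apply_ne_of_apply_eq_self hτx hxy hτy)
    simp only [mul_apply, hτx, swap_apply_left, swap_mul_self_mul] at this
    rw [this, add_zero]

theorem decomposeFin_symm_eq_swap_mul {s : ℕ} (p : Fin (s + 1)) (σ : Perm (Fin s)) :
    decomposeFin.symm (p, σ) = swap 0 p * decomposeFin.symm (0, σ) := by
  ext x
  refine Fin.cases ?_ (fun i => ?_) x <;> simp

theorem decomposeFin_symm_zero_eq_extendDomain {s : ℕ} (σ : Perm (Fin s)) :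
    decomposeFin.symm (0, σ) = σ.extendDomain (finSuccAboveEquiv 0) := by
  refine Equiv.ext fun x => ?_
  refine Fin.cases ?_ (fun i => ?_) x
  · rw [decomposeFin_symm_apply_zero,
      extendDomain_apply_not_subtype _ _ (by simp)]
  · have hi : i.succ = (finSuccAboveEquiv 0 i : Fin (s + 1)) := by simp [finSuccAboveEquiv_apply]
    rw [decomposeFin_symm_apply_succ, swap_self, refl_apply, hi,
      extendDomain_apply_image]
    simp [finSuccAboveEquiv_apply]

theorem card_filter_and_apply_zero_ne_zero {s : ℕ} (P : Perm (Fin (s + 2)) → Prop)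
    [DecidablePred P] :
    #{π | P π ∧ π 0 ≠ 0} =
      ∑ p : Fin (s + 1), #{σ : Perm (Fin (s + 1)) | P (decomposeFin.symm (p.succ, σ))} := by
  simp only [card_filter]
  rw [← Equiv.sum_comp decomposeFin.symm, Fintype.sum_prod_type, Fin.sum_univ_succ]
  simp

end Equiv.Perm

theorem c1_add_card_support_s6 {n : ℕ} (σ : Perm (Fin n)) : c1 σ + #σ.support = n := by
  simpa [c1, Perm.support] using card_filter_add_card_filter_not (s := univ) (fun i => σ i = i)

theorem pexc_eq_card_support_add {s : ℕ} (σ : Perm (Fin (s + 1))) :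
    pexc σ = #σ.support + σ.cycleType.card - if σ 0 = 0 then 0 else 2 := by
  have hfix : (∀ i : Fin (s + 1), (i : ℕ) = 0 → σ i = i) ↔ σ 0 = 0 :=
    ⟨fun h => h 0 rfl, fun h i hi => (Fin.ext hi : i = 0) ▸ h⟩
  have := c1_add_card_support_s6 σ
  simp only [pexc, c2, hfix]
  congr 1
  omega

theorem pexc_decomposeFin_symm_succ {s : ℕ} (p : Fin (s + 1)) (σ : Perm (Fin (s + 1))) :
    pexc (Perm.decomposeFin.symm (p.succ, σ)) = pexc (swap 0 p * σ * (swap 0 p)⁻¹) + 1 := by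
  set τ := Perm.decomposeFin.symm (0, σ) with hτ
  have hτ0 : τ 0 = 0 := Perm.decomposeFin_symm_apply_zero 0 σ
  have hτp : τ p.succ = p.succ ↔ σ p = p := by simp [τ]
  have hsupp : #τ.support = #σ.support := by
    rw [hτ, Perm.decomposeFin_symm_zero_eq_extendDomain, Perm.card_support_extend_domain]
  have hcyc : τ.cycleType = σ.cycleType := by
    rw [hτ, Perm.decomposeFin_symm_zero_eq_extendDomain, Perm.cycleType_extendDomain]
  have hconj : (swap 0 p * σ * (swap 0 p)⁻¹) 0 = 0 ↔ σ p = p := by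
    simp [swap_inv, swap_apply_eq_iff]
  have hp : 0 ≠ p.succ := (Fin.succ_ne_zero p).symm
  rw [pexc_eq_card_support_add, pexc_eq_card_support_add,
    Perm.decomposeFin_symm_eq_swap_mul, ← hτ,
    Perm.card_support_swap_mul_of_apply_eq_self hτ0 hp,
    Perm.card_cycleType_swap_mul_of_apply_eq_self hτ0 hp,
    Perm.card_support_conj, Perm.cycleType_conj, hsupp, hcyc]
  have hπ0 : (swap 0 p.succ * τ) 0 ≠ 0 := by simp [hτ0, hp.symm]
  simp only [hτp, hconj, hπ0, if_false]
  by_cases hσp : σ p = p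
  · simp only [hσp, if_true]
    omega
  · have := Perm.one_lt_card_support_of_ne_one (fun h : σ = 1 => hσp (by simp [h]))
    simp only [hσp, if_false]
    omega

theorem card_filter_pexc_decomposeFin_symm_succ {s k : ℕ} (hk : 1 ≤ k) (p : Fin (s + 1)) :
    #{σ : Perm (Fin (s + 1)) | pexc (Perm.decomposeFin.symm (p.succ, σ)) = k} =
      W (s + 1) (k - 1) :=
  card_equiv (MulAut.conj (swap 0 p)).toEquiv fun σ => by
    simp [pexc_decomposeFin_symm_succ]
    omega

theorem stmt6 (n k : ℕ) (hn : 0 < n) (hk : 1 ≤ k) :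
    (Finset.univ.filter fun π : Equiv.Perm (Fin n) =>
        pexc π = k ∧ π ⟨0, hn⟩ ≠ ⟨0, hn⟩).card = (n - 1) * W (n - 1) (k - 1) := by
  obtain ⟨m, rfl⟩ := Nat.exists_eq_add_one_of_ne_zero hn.ne'
  cases m with
  | zero => simp
  | succ s =>
    rw [Nat.add_sub_cancel]
    calc _ = ∑ p : Fin (s + 1),
          #{σ : Perm (Fin (s + 1)) | pexc (Perm.decomposeFin.symm (p.succ, σ)) = k} :=
          Perm.card_filter_and_apply_zero_ne_zero (fun π => pexc π = k)
      _ = (s + 1) * W (s + 1) (k - 1) := by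
          simp [card_filter_pexc_decomposeFin_symm_succ hk]
end
end

section
/- For every n ≥ 2, the variance of the prefix exchange distance of a uniformly random permutation of Sₙ equals Hₙ + 4/n − 8/n² − Σ_{j=1}^{n} 1/j²; equivalently, (1/n!)·Σ_{π ∈ Sₙ} pexc(π)² − ((1/n!)·Σ_{π ∈ Sₙ} pexc(π))² = Hₙ + 4/n − 8/n² − Σ_{j=1}^{n} 1/j². -/
/-!
Every `π ∈ S_{n+1}` is uniquely `swap 0 p * ê`, where `ê` fixes `0` and acts as `e ∈ Sₙ` on
`1, …, n`. Relative to `e`, `p = 0` adds the fixed point `0`, while `p = q + 1` inserts `0` into the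
cycle of `q + 1`: this turns a fixed point `q` of `e` into a 2-cycle and otherwise changes neither
`c₁` nor `c₂`. So a sum over `S_{n+1}` of a function of `c₁`, `c₂` and `[π 0 = 0]` is a sum over
`Sₙ`. This gives recursions for the moments of `(c₁, c₂)` of degree at most two, and by induction
`E c₁ = 1`, `E c₁² = 2`, `E c₂ = Hₙ - 1`, `E c₁c₂ = Hₙ - 1 - 1/n`, `E c₂² = Hₙ² - Hₙ - ∑ 1/j² + 2/n`
(for `n ≥ 2`). As `pexc = n + c₂ - c₁ - 2·[π 0 ≠ 0]`, the variance follows by algebra.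
-/

open Equiv Finset Filter
open scoped Classical

noncomputable section

/-- The `n`-th harmonic number. -/
def H (n : ℕ) : ℝ := ∑ k ∈ Finset.Icc 1 n, (1 : ℝ) / k

open scoped Nat

namespace Equiv.Perm

variable {α : Type*} [Fintype α] [DecidableEq α]

theorem isCycle_swap_mul_cycleOf {f : Perm α} {x y : α} (hx : f x = x) (hy : f y ≠ y) :
    (swap x y * f.cycleOf y).IsCycle := by
  obtain ⟨l, hl⟩ : ∃ l, toList f y = y :: l := by
    cases h : toList f y with
    | nil => exact absurd (toList_eq_nil_iff.1 h) (not_not.2 (mem_support.2 hy))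
    | cons a l =>
      have := toList_getElem_zero f y (mem_support.2 hy)
      simp_all
  have hxl : x ∉ y :: l := fun h => by
    rw [← hl, mem_toList_iff] at h
    exact hy (h.1.apply_eq_self_iff.2 hx)
  rw [← formPerm_toList, hl, ← List.formPerm_cons_cons]
  exact List.isCycle_formPerm (List.nodup_cons.2 ⟨hxl, hl ▸ nodup_toList f y⟩) (by simp)

theorem card_cycleType_swap_mul_s12 {f : Perm α} {x y : α} (hx : f x = x) (hy : f y ≠ y) :
    Multiset.card (swap x y * f).cycleType = Multiset.card f.cycleType := by
  set c := f.cycleOf y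
  set g := f * c⁻¹
  have hgc : Disjoint g c := disjoint_mul_inv_of_mem_cycleFactorsFinset
    (cycleOf_mem_cycleFactorsFinset_iff.2 (mem_support.2 hy))
  have hf : f = c * g := by rw [← hgc.commute.eq, inv_mul_cancel_right]
  have hcx : c x = x := by simp [c, cycleOf_apply, hx]
  have hgx : g x = x := by rw [mul_apply, inv_eq_iff_eq.2 hcx.symm, hx]
  have hgy : g y = y := (hgc y).resolve_right (by simpa [c] using hy)
  have hdg : Disjoint (swap x y * c) g := fun z => by
    by_cases hz : g z = z
    · exact Or.inr hz
    · have hzx : z ≠ x := by rintro rfl; exact hz hgx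
      have hzy : z ≠ y := by rintro rfl; exact hz hgy
      rw [mul_apply, (hgc z).resolve_left hz, swap_apply_of_ne_of_ne hzx hzy]
      exact Or.inl rfl
  rw [hf, ← mul_assoc, hdg.cycleType_mul, hgc.symm.cycleType_mul,
    (isCycle_swap_mul_cycleOf hx hy).cycleType, (isCycle_cycleOf f hy).cycleType]
  simp

end Equiv.Perm

def succPerm {n : ℕ} (e : Perm (Fin n)) : Perm (Fin (n + 1)) :=
  e.extendDomain (finSuccAboveEquiv 0)

def cycleSum (n : ℕ) (F : ℝ → ℝ → ℝ) : ℝ := ∑ π : Perm (Fin n), F (c1 π) (c2 π)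

def H2 (n : ℕ) : ℝ := ∑ j ∈ Icc 1 n, 1 / (j : ℝ) ^ 2

theorem H_succ (n : ℕ) : H (n + 1) = H n + 1 / (n + 1) := by
  rw [H, H, sum_Icc_succ_top (by omega)]
  push_cast
  ring

theorem H2_succ (n : ℕ) : H2 (n + 1) = H2 n + 1 / (n + 1) ^ 2 := by
  rw [H2, H2, sum_Icc_succ_top (by omega)]
  push_cast
  ring

section

variable {n : ℕ}

theorem succPerm_zero (e : Perm (Fin n)) : succPerm e 0 = 0 :=
  Perm.extendDomain_apply_not_subtype _ _ (by simp)

theorem succPerm_succ (e : Perm (Fin n)) (x : Fin n) : succPerm e x.succ = (e x).succ := by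
  simpa [succPerm, finSuccAboveEquiv_apply] using
    Perm.extendDomain_apply_image e (finSuccAboveEquiv 0) x

theorem decomposeFin_symm_eq_swap_mul (p : Fin (n + 1)) (e : Perm (Fin n)) :
    Perm.decomposeFin.symm (p, e) = swap 0 p * succPerm e := by
  ext i
  refine Fin.cases ?_ (fun x => ?_) i <;>
    simp [Perm.decomposeFin_symm_apply_zero, Perm.decomposeFin_symm_apply_succ, succPerm_zero,
      succPerm_succ]

theorem sum_perm_fin_succ {M : Type*} [AddCommMonoid M] (f : Perm (Fin (n + 1)) → M) :
    ∑ π, f π = ∑ e : Perm (Fin n), ∑ p : Fin (n + 1), f (swap 0 p * succPerm e) := by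
  rw [← Perm.decomposeFin.symm.sum_comp, Fintype.sum_prod_type, sum_comm]
  simp only [decomposeFin_symm_eq_swap_mul]

theorem c1_succPerm (e : Perm (Fin n)) : c1 (succPerm e) = c1 e + 1 := by
  simp [c1, Fin.card_filter_univ_succ, succPerm_zero, succPerm_succ]

theorem c2_succPerm (e : Perm (Fin n)) : c2 (succPerm e) = c2 e := by
  rw [c2, c2, succPerm, Perm.cycleType_extendDomain]

theorem c1_swap_mul_succPerm (q : Fin n) (e : Perm (Fin n)) :
    c1 (swap 0 q.succ * succPerm e) + (if e q = q then 1 else 0) = c1 e := by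
  have hfix : univ.filter (fun x : Fin n => (swap 0 q.succ * succPerm e) x.succ = x.succ)
      = (univ.filter fun x => e x = x).erase q := by
    ext x
    simp only [mem_filter, mem_erase, mem_univ, Perm.mul_apply, succPerm_succ, swap_apply_def,
      Fin.succ_ne_zero, if_false, Fin.succ_inj]
    split_ifs <;> grind
  rw [c1, c1, Fin.card_filter_univ_succ, Perm.mul_apply, succPerm_zero, swap_apply_left,
    if_neg (Fin.succ_ne_zero q), hfix]
  split_ifs with h
  · exact card_erase_add_one (by simpa using h)
  · rw [erase_eq_of_notMem (by simpa using h), add_zero]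

theorem c2_swap_mul_succPerm (q : Fin n) (e : Perm (Fin n)) :
    c2 (swap 0 q.succ * succPerm e) = c2 e + if e q = q then 1 else 0 := by
  have h0 : succPerm e 0 = 0 := succPerm_zero e
  have hq : succPerm e q.succ = (e q).succ := succPerm_succ e q
  split_ifs with h
  · have hdisj : (swap 0 q.succ).Disjoint (succPerm e) := by
      intro z
      by_cases hz : z = 0 ∨ z = q.succ
      · right
        rcases hz with rfl | rfl
        exacts [h0, by rw [hq, h]]
      · rw [not_or] at hz
        exact Or.inl (swap_apply_of_ne_of_ne hz.1 hz.2)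
    rw [← c2_succPerm e, c2, c2, hdisj.cycleType_mul,
      (Perm.isCycle_swap (Fin.succ_ne_zero q).symm).cycleType]
    simp [add_comm]
  · rw [c2, Perm.card_cycleType_swap_mul_s12 h0 (by simpa [hq] using h), ← c2, c2_succPerm, add_zero]

theorem sum_ite_apply_eq_self (e : Perm (Fin n)) (u v : ℝ) :
    ∑ q, (if e q = q then u else v) = c1 e * u + (n - c1 e) * v := by
  have hcard : (#(univ.filter fun q => ¬e q = q) : ℝ) = n - c1 e := by
    rw [c1, eq_sub_iff_add_eq', ← Nat.cast_add, card_filter_add_card_filter_not, card_univ,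
      Fintype.card_fin]
  rw [sum_ite, sum_const, sum_const, nsmul_eq_mul, nsmul_eq_mul, hcard, c1]

theorem sum_perm_succ_eq_cycleSum (G : ℝ → ℝ → ℝ → ℝ) :
    ∑ π : Perm (Fin (n + 1)), G (c1 π) (c2 π) (if π 0 = 0 then 1 else 0) =
      cycleSum n fun a b => G (a + 1) b 1 + (n - a) * G a b 0 + a * G (a - 1) (b + 1) 0 := by
  rw [sum_perm_fin_succ, cycleSum]
  refine sum_congr rfl fun e _ => ?_
  have hq : ∀ q : Fin n,
      G (c1 (swap 0 q.succ * succPerm e)) (c2 (swap 0 q.succ * succPerm e))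
          (if (swap 0 q.succ * succPerm e) 0 = 0 then 1 else 0)
        = if e q = q then G (c1 e - 1) (c2 e + 1) 0 else G (c1 e) (c2 e) 0 := by
    intro q
    have hc1 := c1_swap_mul_succPerm q e
    rw [c2_swap_mul_succPerm, Perm.mul_apply, succPerm_zero, swap_apply_left,
      if_neg (Fin.succ_ne_zero q)]
    split_ifs with h
    · rw [if_pos h] at hc1
      rw [← hc1]
      push_cast
      rw [add_sub_cancel_right]
    · rw [if_neg h, add_zero] at hc1
      rw [hc1, add_zero]
  rw [Fin.sum_univ_succ, swap_self, ← Perm.one_def, one_mul, succPerm_zero, if_pos rfl,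
    c1_succPerm, c2_succPerm, sum_congr rfl fun q _ => hq q, sum_ite_apply_eq_self]
  push_cast
  ring

theorem cycleSum_succ (F : ℝ → ℝ → ℝ) :
    cycleSum (n + 1) F =
      cycleSum n fun a b => F (a + 1) b + (n - a) * F a b + a * F (a - 1) (b + 1) :=
  sum_perm_succ_eq_cycleSum fun a b _ => F a b

theorem sum_ite_apply_zero_eq_zero (F : ℝ → ℝ → ℝ) :
    ∑ π : Perm (Fin (n + 1)), (if π 0 = 0 then F (c1 π) (c2 π) else 0) =
      cycleSum n fun a b => F (a + 1) b := by
  simpa only [boole_mul, one_mul, zero_mul, mul_zero, add_zero] using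
    sum_perm_succ_eq_cycleSum fun a b i => i * F a b

theorem cycleSum_congr {F G : ℝ → ℝ → ℝ} (h : ∀ a b, F a b = G a b) :
    cycleSum n F = cycleSum n G := by
  simp only [cycleSum, h]

theorem cycleSum_add (F G : ℝ → ℝ → ℝ) :
    cycleSum n (fun a b => F a b + G a b) = cycleSum n F + cycleSum n G :=
  sum_add_distrib

theorem cycleSum_sub (F G : ℝ → ℝ → ℝ) :
    cycleSum n (fun a b => F a b - G a b) = cycleSum n F - cycleSum n G :=
  sum_sub_distrib _ _

theorem cycleSum_const_mul (r : ℝ) (F : ℝ → ℝ → ℝ) :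
    cycleSum n (fun a b => r * F a b) = r * cycleSum n F :=
  (mul_sum _ _ _).symm

theorem cycleSum_const (r : ℝ) : cycleSum n (fun _ _ => r) = r * n ! := by
  simp [cycleSum, Fintype.card_perm, mul_comm]

theorem cycleSum_zero (F : ℝ → ℝ → ℝ) : cycleSum 0 F = F 0 0 := by
  simp [cycleSum, c1, c2]

theorem cycleSum_one (F : ℝ → ℝ → ℝ) : cycleSum 1 F = F 1 0 := by
  simp [cycleSum_succ, cycleSum_zero]

theorem cycleSum_two (F : ℝ → ℝ → ℝ) : cycleSum 2 F = F 2 0 + F 0 1 := by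
  rw [cycleSum_succ, cycleSum_one]
  norm_num

theorem cycleSum_fst (hn : 1 ≤ n) : cycleSum n (fun a _ => a) = n ! := by
  induction n, hn using Nat.le_induction with
  | base => simp [cycleSum_one]
  | succ n _ ih =>
    have step : cycleSum (n + 1) (fun a _ => a) = cycleSum n fun a _ => n * a + 1 := by
      rw [cycleSum_succ]
      exact cycleSum_congr fun a b => by ring
    rw [step, cycleSum_add, cycleSum_const_mul, cycleSum_const, ih, Nat.factorial_succ]
    push_cast
    ring

theorem cycleSum_snd (hn : 1 ≤ n) : cycleSum n (fun _ b => b) = (H n - 1) * n ! := by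
  induction n, hn using Nat.le_induction with
  | base => simp [cycleSum_one, H]
  | succ n hn ih =>
    have step : cycleSum (n + 1) (fun _ b => b) = cycleSum n fun a b => (n + 1) * b + a := by
      rw [cycleSum_succ]
      exact cycleSum_congr fun a b => by ring
    rw [step, cycleSum_add, cycleSum_const_mul, ih, cycleSum_fst hn, H_succ, Nat.factorial_succ]
    push_cast
    field_simp
    ring

theorem cycleSum_fst_sq (hn : 2 ≤ n) : cycleSum n (fun a _ => a ^ 2) = 2 * n ! := by
  induction n, hn using Nat.le_induction with
  | base => norm_num [cycleSum_two]
  | succ n hn ih =>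
    have step : cycleSum (n + 1) (fun a _ => a ^ 2)
        = cycleSum n fun a _ => (n - 1) * a ^ 2 + 3 * a + 1 := by
      rw [cycleSum_succ]
      exact cycleSum_congr fun a b => by ring
    rw [step, cycleSum_add, cycleSum_add, cycleSum_const_mul, cycleSum_const_mul, cycleSum_const,
      ih, cycleSum_fst (by omega), Nat.factorial_succ]
    push_cast
    ring

theorem cycleSum_fst_mul_snd (hn : 2 ≤ n) :
    cycleSum n (fun a b => a * b) = (H n - 1 - 1 / n) * n ! := by
  induction n, hn using Nat.le_induction with
  | base => norm_num [cycleSum_two, H, sum_Icc_succ_top]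
  | succ n hn ih =>
    have step : cycleSum (n + 1) (fun a b => a * b)
        = cycleSum n fun a b => n * (a * b) + b + a ^ 2 - a := by
      rw [cycleSum_succ]
      exact cycleSum_congr fun a b => by ring
    rw [step, cycleSum_sub, cycleSum_add, cycleSum_add, cycleSum_const_mul, ih,
      cycleSum_snd (by omega), cycleSum_fst_sq hn, cycleSum_fst (by omega), H_succ,
      Nat.factorial_succ]
    push_cast
    field_simp
    ring

theorem cycleSum_snd_sq (hn : 2 ≤ n) :
    cycleSum n (fun _ b => b ^ 2) = (H n ^ 2 - H n - H2 n + 2 / n) * n ! := by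
  induction n, hn using Nat.le_induction with
  | base => norm_num [cycleSum_two, H, H2, sum_Icc_succ_top]
  | succ n hn ih =>
    have step : cycleSum (n + 1) (fun _ b => b ^ 2)
        = cycleSum n fun a b => (n + 1) * b ^ 2 + 2 * (a * b) + a := by
      rw [cycleSum_succ]
      exact cycleSum_congr fun a b => by ring
    rw [step, cycleSum_add, cycleSum_add, cycleSum_const_mul, cycleSum_const_mul, ih,
      cycleSum_fst_mul_snd hn, cycleSum_fst (by omega), H_succ, H2_succ, Nat.factorial_succ]
    push_cast
    field_simp
    ring

theorem cycleSum_add_snd_sub_fst (c : ℝ) (hn : 1 ≤ n) :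
    cycleSum n (fun a b => c + b - a) = (c + H n - 2) * n ! := by
  rw [cycleSum_sub, cycleSum_add, cycleSum_const, cycleSum_snd hn, cycleSum_fst hn]
  ring

theorem cycleSum_add_snd_sub_fst_sq (c : ℝ) (hn : 2 ≤ n) :
    cycleSum n (fun a b => (c + b - a) ^ 2) =
      ((c + H n - 2) ^ 2 + H n - H2 n + 4 / n) * n ! := by
  calc cycleSum n (fun a b => (c + b - a) ^ 2)
      = cycleSum n fun a b => c ^ 2 + 2 * c * b - 2 * c * a + b ^ 2 - 2 * (a * b) + a ^ 2 :=
        cycleSum_congr fun a b => by ring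
    _ = _ := by
      rw [cycleSum_add, cycleSum_sub, cycleSum_add, cycleSum_sub, cycleSum_add, cycleSum_const,
        cycleSum_const_mul, cycleSum_const_mul, cycleSum_const_mul, cycleSum_snd (by omega),
        cycleSum_fst (by omega), cycleSum_snd_sq hn, cycleSum_fst_mul_snd hn, cycleSum_fst_sq hn]
      ring

-- The subtractions in `pexc` never truncate: a permutation moving `0` moves at least two points.
theorem pexc_cast (π : Perm (Fin n)) :
    (pexc π : ℝ) = n + c2 π - c1 π - if ∀ i : Fin n, (i : ℕ) = 0 → π i = i then 0 else 2 := by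
  have hsupp : c1 π + #π.support = n := by
    rw [c1, Perm.support, card_filter_add_card_filter_not, card_univ, Fintype.card_fin]
  rw [pexc]
  split_ifs with h
  · rw [Nat.sub_zero, Nat.cast_sub (by omega)]
    push_cast
    ring
  · have : 2 ≤ #π.support := Perm.two_le_card_support_of_ne_one (by rintro rfl; simp at h)
    rw [Nat.cast_sub (by omega), Nat.cast_sub (by omega)]
    push_cast
    ring

theorem pexc_cast_succ (π : Perm (Fin (n + 1))) :
    (pexc π : ℝ) = (n - 1 + c2 π - c1 π) + if π 0 = 0 then 2 else 0 := by
  rw [pexc_cast]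
  simp only [Fin.val_eq_zero_iff, forall_eq]
  split_ifs <;> push_cast <;> ring

theorem sum_pexc :
    ∑ π : Perm (Fin (n + 1)), (pexc π : ℝ) =
      cycleSum (n + 1) (fun a b => (n - 1 : ℝ) + b - a) + 2 * n ! := by
  simp only [pexc_cast_succ, sum_add_distrib, sum_ite_apply_zero_eq_zero fun _ _ => (2 : ℝ),
    cycleSum_const]
  rfl

theorem sum_pexc_sq :
    ∑ π : Perm (Fin (n + 1)), (pexc π : ℝ) ^ 2 =
      cycleSum (n + 1) (fun a b => ((n - 1 : ℝ) + b - a) ^ 2) +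
        4 * cycleSum n (fun a b => (n - 1 : ℝ) + b - a) := by
  calc ∑ π : Perm (Fin (n + 1)), (pexc π : ℝ) ^ 2
      = ∑ π : Perm (Fin (n + 1)), (((n - 1 : ℝ) + c2 π - c1 π) ^ 2 +
          if π 0 = 0 then 4 * ((n - 1 : ℝ) + c2 π - c1 π + 1) else 0) :=
        sum_congr rfl fun π _ => by rw [pexc_cast_succ]; split_ifs <;> ring
    _ = _ := by
      rw [sum_add_distrib, sum_ite_apply_zero_eq_zero fun a b => 4 * ((n - 1 : ℝ) + b - a + 1),
        ← cycleSum_const_mul]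
      exact congrArg _ (cycleSum_congr fun a b => by ring)

end

theorem stmt12 (n : ℕ) (hn : 2 ≤ n) :
    (∑ π : Equiv.Perm (Fin n), (pexc π : ℝ) ^ 2) / (Nat.factorial n : ℝ)
      - ((∑ π : Equiv.Perm (Fin n), (pexc π : ℝ)) / (Nat.factorial n : ℝ)) ^ 2 =
      H n + 4 / n - 8 / (n : ℝ) ^ 2 - ∑ j ∈ Finset.Icc 1 n, 1 / (j : ℝ) ^ 2 := by
  obtain ⟨n, rfl⟩ : ∃ m, n = m + 1 := ⟨n - 1, by omega⟩
  rw [sum_pexc_sq, sum_pexc, cycleSum_add_snd_sub_fst_sq _ hn,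
    cycleSum_add_snd_sub_fst (n := n + 1) _ (by omega),
    cycleSum_add_snd_sub_fst (n := n) _ (by omega), ← H2, H_succ, Nat.factorial_succ]
  push_cast
  field_simp
  ring
end
end

section
/- The number of permutations π ∈ Sₙ with pexc(π) = k and π(1) = 1 equals Σ over i with max(n−k,1) ≤ i ≤ ⌊(2n−k)/2⌋ of C(n−1, i−1)·d(n−i, k−n+i), where d(m, r) is the number of derangements of m elements with r cycles. -/
open Equiv Finset Filter
open scoped Classical

noncomputable section

/-- Total number of cycles of a permutation (fixed points count as 1-cycles). -/
def numCycles {n : ℕ} (π : Equiv.Perm (Fin n)) : ℕ := c2 π + c1 π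

/-- Number of derangements of `m` elements with `r` cycles. -/
def dnum (m r : ℕ) : ℕ :=
  (Finset.univ.filter fun π : Equiv.Perm (Fin m) =>
    (∀ i, π i ≠ i) ∧ numCycles π = r).card

lemma c1_add_sum {n : ℕ} (π : Equiv.Perm (Fin n)) : c1 π + π.cycleType.sum = n := by
  rw [Equiv.Perm.sum_cycleType]
  have h := Finset.card_filter_add_card_filter_not (s := (univ : Finset (Fin n)))
    (p := fun x => π x = x)
  simpa [c1, Equiv.Perm.support, Finset.card_univ] using h

lemma two_c2_le {n : ℕ} (π : Equiv.Perm (Fin n)) : 2 * c2 π ≤ π.cycleType.sum := by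
  have := Multiset.card_nsmul_le_sum (s := π.cycleType) (a := 2)
    (fun x hx => Equiv.Perm.two_le_of_mem_cycleType hx)
  simpa [c2, mul_comm, smul_eq_mul] using this

lemma slice_card {n m r : ℕ} (F : Finset (Fin n)) (f : Fin m ≃ {a : Fin n // a ∉ F}) :
    (Finset.univ.filter fun π : Equiv.Perm (Fin n) =>
      (Finset.univ.filter fun x => π x = x) = F ∧ c2 π = r).card = dnum m r := by
  classical
  symm
  apply Finset.card_bij (fun σ _ => σ.extendDomain f)
  · -- maps to
    rintro σ hσ
    simp only [Finset.mem_filter, Finset.mem_univ, true_and] at hσ ⊢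
    obtain ⟨hder, hnc⟩ := hσ
    have hc1 : c1 σ = 0 := by
      simp only [c1, Finset.card_eq_zero, Finset.filter_eq_empty_iff]
      intro x _
      exact hder x
    constructor
    · ext x
      simp only [Finset.mem_filter, Finset.mem_univ, true_and]
      by_cases hx : x ∈ F
      · simp [Equiv.Perm.extendDomain_apply_not_subtype σ f (show ¬ x ∉ F from not_not_intro hx), hx]
      · simp only [hx, iff_false]
        rw [Equiv.Perm.extendDomain_apply_subtype σ f hx]
        intro hcontra
        have : f (σ (f.symm ⟨x, hx⟩)) = f (f.symm ⟨x, hx⟩) := by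
          apply Subtype.ext
          simpa using hcontra
        exact hder _ (f.injective this)
    · rw [c2, Equiv.Perm.cycleType_extendDomain]
      rw [numCycles, hc1] at hnc
      simpa [c2] using hnc
  · -- injective
    intro σ₁ h₁ σ₂ h₂ h
    exact Equiv.Perm.extendDomainHom_injective f h
  · -- surjective
    intro π hπ
    simp only [Finset.mem_filter, Finset.mem_univ, true_and] at hπ
    obtain ⟨hfix, hc2⟩ := hπ
    have hmemF : ∀ x : Fin n, x ∈ F ↔ π x = x := by
      intro x
      rw [← hfix]; simp
    have h₁ : ∀ x : Fin n, x ∉ F ↔ π x ∉ F := by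
      intro x
      constructor
      · intro hx hpx
        have := (hmemF (π x)).mp hpx
        exact hx ((hmemF x).mpr (π.injective this))
      · intro hx hxF
        exact hx (by rwa [(hmemF x).mp hxF])
    set τ : Equiv.Perm {x : Fin n // x ∉ F} := π.subtypePerm (fun x => (h₁ x).symm) with hτ
    set σ : Equiv.Perm (Fin m) := (Equiv.permCongr f.symm) τ with hσ
    have hext : σ.extendDomain f = π := by
      refine Equiv.ext fun x => ?_
      by_cases hx : x ∈ F
      · rw [Equiv.Perm.extendDomain_apply_not_subtype σ f (not_not_intro hx)]
        exact ((hmemF x).mp hx).symm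
      · rw [Equiv.Perm.extendDomain_apply_subtype σ f hx]
        simp [hσ, hτ, Equiv.permCongr_apply, Equiv.Perm.subtypePerm_apply]
    refine ⟨σ, ?_, hext⟩
    simp only [Finset.mem_filter, Finset.mem_univ, true_and]
    constructor
    · intro a ha
      have : τ (f a) = f a := by
        have := congrArg f ha
        simpa [hσ, Equiv.permCongr_apply] using this
      have : π (f a : Fin n) = (f a : Fin n) := by
        simpa [hτ, Equiv.Perm.subtypePerm_apply, Subtype.ext_iff] using this
      exact (f a).2 ((hmemF _).mpr this)
    · have hc1σ : c1 σ = 0 := by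
        simp only [c1, Finset.card_eq_zero, Finset.filter_eq_empty_iff]
        intro a _ ha
        have : τ (f a) = f a := by
          have := congrArg f ha
          simpa [hσ, Equiv.permCongr_apply] using this
        have : π (f a : Fin n) = (f a : Fin n) := by
          simpa [hτ, Equiv.Perm.subtypePerm_apply, Subtype.ext_iff] using this
        exact (f a).2 ((hmemF _).mpr this)
      rw [numCycles, hc1σ, add_zero, c2, ← Equiv.Perm.cycleType_extendDomain f (g := σ), hext]
      exact hc2

lemma fixset_count {n : ℕ} (z : Fin n) (i : ℕ) (hi : 1 ≤ i) :
    (((Finset.univ : Finset (Fin n)).powersetCard i).filter fun F => z ∈ F).card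
      = (n - 1).choose (i - 1) := by
  classical
  have key : (((Finset.univ : Finset (Fin n)).powersetCard i).filter fun F => z ∈ F).card
      = ((Finset.univ.erase z).powersetCard (i - 1)).card := by
    symm
    apply Finset.card_bij (fun G _ => insert z G)
    · intro G hG
      rw [Finset.mem_powersetCard] at hG
      have hzG : z ∉ G := fun h => (Finset.mem_erase.mp (hG.1 h)).1 rfl
      simp only [Finset.mem_filter, Finset.mem_powersetCard]
      refine ⟨⟨Finset.subset_univ _, ?_⟩, Finset.mem_insert_self _ _⟩
      rw [Finset.card_insert_of_notMem hzG, hG.2]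
      omega
    · intro G₁ h₁ G₂ h₂ h
      rw [Finset.mem_powersetCard] at h₁ h₂
      have hz₁ : z ∉ G₁ := fun h => (Finset.mem_erase.mp (h₁.1 h)).1 rfl
      have hz₂ : z ∉ G₂ := fun h => (Finset.mem_erase.mp (h₂.1 h)).1 rfl
      rw [← Finset.erase_insert hz₁, ← Finset.erase_insert hz₂, h]
    · intro F hF
      simp only [Finset.mem_filter, Finset.mem_powersetCard] at hF
      refine ⟨F.erase z, ?_, Finset.insert_erase hF.2⟩
      rw [Finset.mem_powersetCard]
      exact ⟨Finset.erase_subset_erase z (Finset.subset_univ F),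
        by rw [Finset.card_erase_of_mem hF.2, hF.1.2]⟩
  rw [key, Finset.card_powersetCard, Finset.card_erase_of_mem (Finset.mem_univ z),
    Finset.card_univ, Fintype.card_fin]

lemma slice_i {n : ℕ} (z : Fin n) (i r : ℕ) (hi : 1 ≤ i) :
    (Finset.univ.filter fun π : Equiv.Perm (Fin n) =>
        π z = z ∧ c1 π = i ∧ c2 π = r).card
      = (n - 1).choose (i - 1) * dnum (n - i) r := by
  classical
  rw [Finset.card_eq_sum_card_fiberwise
    (f := fun π : Equiv.Perm (Fin n) => Finset.univ.filter fun x => π x = x)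
    (t := ((Finset.univ : Finset (Fin n)).powersetCard i).filter fun F => z ∈ F)
    (by
      intro π hπ
      simp only [Finset.mem_coe, Finset.mem_filter, Finset.mem_univ, true_and] at hπ
      simp only [Finset.mem_coe, Finset.mem_filter, Finset.mem_powersetCard]
      exact ⟨⟨Finset.subset_univ _, hπ.2.1⟩, by simp [hπ.1]⟩)]
  have hterm : ∀ F ∈ ((Finset.univ : Finset (Fin n)).powersetCard i).filter fun F => z ∈ F,
      ((Finset.univ.filter fun π : Equiv.Perm (Fin n) =>
        π z = z ∧ c1 π = i ∧ c2 π = r).filter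
          (fun π => (Finset.univ.filter fun x => π x = x) = F)).card = dnum (n - i) r := by
    intro F hF
    simp only [Finset.mem_filter, Finset.mem_powersetCard] at hF
    have hcard : Fintype.card {a : Fin n // a ∉ F} = n - i := by
      rw [Fintype.card_subtype_compl, Fintype.card_fin, Fintype.card_coe, hF.1.2]
    have := slice_card (r := r) F (Fintype.equivFinOfCardEq hcard).symm
    rw [← this]
    congr 1
    ext π
    simp only [Finset.mem_filter, Finset.mem_univ, true_and]
    constructor
    · rintro ⟨⟨_, _, hc2⟩, hfs⟩
      exact ⟨hfs, hc2⟩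
    · rintro ⟨hfs, hc2⟩
      have hz : π z = z := by
        have : z ∈ Finset.univ.filter fun x => π x = x := hfs ▸ hF.2
        simpa using this
      have hc1 : c1 π = i := by rw [c1, hfs, hF.1.2]
      exact ⟨⟨hz, hc1, hc2⟩, hfs⟩
  rw [Finset.sum_congr rfl hterm, Finset.sum_const, fixset_count z i hi, smul_eq_mul]

theorem stmt13 (n k : ℕ) (hn : 0 < n) :
    (Finset.univ.filter fun π : Equiv.Perm (Fin n) =>
        pexc π = k ∧ π ⟨0, hn⟩ = ⟨0, hn⟩).card =
      ∑ i ∈ Finset.Icc (max (n - k) 1) ((2 * n - k) / 2),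
        (n - 1).choose (i - 1) * dnum (n - i) (k + i - n) := by
  classical
  set z : Fin n := ⟨0, hn⟩ with hz
  have hifcond : ∀ π : Equiv.Perm (Fin n), π z = z →
      ((if ∀ i : Fin n, (i : ℕ) = 0 → π i = i then 0 else 2) = 0) := by
    intro π hπ
    rw [if_pos]
    intro i hi
    have : i = z := Fin.ext hi
    rw [this]; exact hπ
  have hpexc : ∀ π : Equiv.Perm (Fin n), π z = z →
      pexc π = π.cycleType.sum + c2 π := by
    intro π hπ
    have h1 := c1_add_sum π
    rw [pexc, hifcond π hπ]
    omega
  rw [Finset.card_eq_sum_card_fiberwise (f := (c1 : Equiv.Perm (Fin n) → ℕ))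
    (t := Finset.Icc (max (n - k) 1) ((2 * n - k) / 2))
    (by
      intro π hπ
      simp only [Finset.mem_coe, Finset.mem_filter, Finset.mem_univ, true_and] at hπ
      obtain ⟨hk, hfix⟩ := hπ
      have h1 := c1_add_sum π
      have h2 := two_c2_le π
      have hk' : π.cycleType.sum + c2 π = k := by rw [← hpexc π hfix]; exact hk
      have hc1pos : 1 ≤ c1 π := by
        rw [c1, ← Finset.card_singleton z]
        apply Finset.card_le_card
        intro x hx
        rw [Finset.mem_singleton] at hx
        simp [hx, hfix]
      rw [Finset.mem_coe, Finset.mem_Icc]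
      constructor
      · omega
      · rw [Nat.le_div_iff_mul_le (by norm_num)]
        omega)]
  apply Finset.sum_congr rfl
  intro i hi
  rw [Finset.mem_Icc] at hi
  have hi1 : 1 ≤ i := le_trans (le_max_right _ _) hi.1
  have hink : n - k ≤ i := le_trans (le_max_left _ _) hi.1
  rw [← slice_i z i (k + i - n) hi1]
  congr 1
  ext π
  simp only [Finset.mem_filter, Finset.mem_univ, true_and]
  constructor
  · rintro ⟨⟨hk, hfix⟩, hc1⟩
    have h1 := c1_add_sum π
    have hk' : π.cycleType.sum + c2 π = k := by rw [← hpexc π hfix]; exact hk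
    exact ⟨hfix, hc1, by omega⟩
  · rintro ⟨hfix, hc1, hc2⟩
    have h1 := c1_add_sum π
    refine ⟨⟨?_, hfix⟩, hc1⟩
    rw [hpexc π hfix]
    have hup : i ≤ (2 * n - k) / 2 := hi.2
    rw [Nat.le_div_iff_mul_le (by norm_num)] at hup
    omega
end
end
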